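/- arXiv:2412.06055 — 6 statements merged into one kernel-verified Lean document; each statement's English description precedes it below -/
import Mathlib

section
/- A partial Steiner triple system A admits a hyperfree ordering (a linear order in which each element lies in at most one block with two smaller elements) if and only if A is unconfined (every finite non-empty subset contains a point in at most one block of that subset). -/
/-- A Steiner quasigroup: a commutative, idempotent binary structure
with `x * (x * y) = y`. -/
class Steiner (M : Type) extends Mul M where
  comm : ∀ x y : M, x * y = y * x
  idem : ∀ x : M, x * x = x
  lcancel : ∀ x y : M, x * (x * y) = y

namespace Steiner

variable {M : Type} [Steiner M]

/-- Membership in the subquasigroup generated by `A`. -/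
inductive mem_closure (A : Set M) : M → Prop
  | base {a : M} : a ∈ A → mem_closure A a
  | mul {a b : M} : mem_closure A a → mem_closure A b → mem_closure A (a * b)

/-- The subquasigroup generated by `A`. -/
def closure (A : Set M) : Set M := {x | mem_closure A x}

instance (A : Set M) : Steiner (closure A) where
  mul a b := ⟨a.1 * b.1, a.2.mul b.2⟩
  comm a b := Subtype.ext (Steiner.comm a.1 b.1)
  idem a := Subtype.ext (Steiner.idem a.1)
  lcancel a b := Subtype.ext (Steiner.lcancel a.1 b.1)

/-- `A` is independent: the generated subquasigroup has the universal mapping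
property over `A` with respect to the class of Steiner quasigroups. -/
def Independent (A : Set M) : Prop :=
  ∀ (N : Type) [Steiner N] (f : A → N),
    ∃ g : closure A →ₙ* N, ∀ a : A, g ⟨a.1, mem_closure.base a.2⟩ = f a

/-- A tuple is independent if its entries are pairwise distinct and its
range is an independent set. -/
def IndepTuple {ι : Type} (a : ι → M) : Prop :=
  Function.Injective a ∧ Independent (Set.range a)

/-- `A` is a free base of `M`: it generates `M` and `M` has the universal
mapping property over `A`. -/
def FreeBase (A : Set M) : Prop :=
  closure A = Set.univ ∧
  ∀ (N : Type) [Steiner N] (f : A → N),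
    ∃ g : M →ₙ* N, ∀ a : A, g a.1 = f a

/-- Terms in the language with one binary operation. -/
inductive Term (α : Type) where
  | var : α → Term α
  | mul : Term α → Term α → Term α

/-- Evaluation of a term at an assignment. -/
def Term.eval {α : Type} (e : α → M) : Term α → M
  | .var x => e x
  | .mul t s => t.eval e * s.eval e

/-- Equivalence of terms generated by applications of commutativity to subterms. -/
inductive TEquiv {α : Type} : Term α → Term α → Prop
  | refl (t : Term α) : TEquiv t t
  | symm {t s : Term α} : TEquiv t s → TEquiv s t
  | trans {t s u : Term α} : TEquiv t s → TEquiv s u → TEquiv t u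
  | comm (t s : Term α) : TEquiv (.mul t s) (.mul s t)
  | congr {t t' s s' : Term α} : TEquiv t t' → TEquiv s s' →
      TEquiv (.mul t s) (.mul t' s')

/-- The subterm relation. -/
inductive Subterm {α : Type} : Term α → Term α → Prop
  | refl (t : Term α) : Subterm t t
  | left {s t r : Term α} : Subterm s t → Subterm s (.mul t r)
  | right {s t r : Term α} : Subterm s t → Subterm s (.mul r t)

/-- A term is reduced if it contains no subterm of the forms `t₁·t₂` with
`t₁ ∼ t₂`, `t₁·(t₂·t₃)` with `t₁ ∼ t₂` or `t₁ ∼ t₃`, or `(t₁·t₂)·t₃` with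
`t₁ ∼ t₃` or `t₂ ∼ t₃`. -/
def Reduced {α : Type} (t : Term α) : Prop :=
  (∀ t1 t2 : Term α, Subterm (.mul t1 t2) t → ¬ TEquiv t1 t2) ∧
  (∀ t1 t2 t3 : Term α, Subterm (.mul t1 (.mul t2 t3)) t →
      ¬ TEquiv t1 t2 ∧ ¬ TEquiv t1 t3) ∧
  (∀ t1 t2 t3 : Term α, Subterm (.mul (.mul t1 t2) t3) t →
      ¬ TEquiv t1 t3 ∧ ¬ TEquiv t2 t3)

/-- The rank of a term. -/
def Term.rank {α : Type} : Term α → ℕ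
  | .var _ => 0
  | .mul t s => max t.rank s.rank + 1

/-- Number of occurrences of a variable in a term. -/
def Term.occ {α : Type} [DecidableEq α] (x : α) : Term α → ℕ
  | .var y => if y = x then 1 else 0
  | .mul t s => t.occ x + s.occ x

/-- The variable `x` occurs in the term. -/
inductive Occurs {α : Type} (x : α) : Term α → Prop
  | var : Occurs x (.var x)
  | left {t s : Term α} : Occurs x t → Occurs x (.mul t s)
  | right {t s : Term α} : Occurs x s → Occurs x (.mul t s)

/-- The levels of `M` over `A`. -/
def level (A : Set M) : ℕ → Set M
  | 0 => A
  | n + 1 => {z | ∃ a ∈ level A n, ∃ b ∈ level A n, z = a * b}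

/-- `S` is a standard free construction over `A`. -/
def StdFree (A : Set M) (S : ℕ → Set M) : Prop :=
  S 0 = A ∧
  (∀ n, S (n + 1) = {z | ∃ a ∈ S n, ∃ b ∈ S n, z = a * b}) ∧
  (∀ a ∈ S 0, ∀ b ∈ S 0, a ≠ b → a * b ∉ S 0) ∧
  (∀ n, ∀ a ∈ S (n + 1), a ∉ S n → ∀ b ∈ S (n + 1), b ∉ S n → a ≠ b →
    a * b ∉ S (n + 1)) ∧
  (∀ n, ∀ a ∈ S (n + 1), a ∉ S n → ∃ b ∈ S n, ∃ c ∈ S n, b ≠ c ∧ a = b * c ∧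
    ∀ b' ∈ S n, ∀ c' ∈ S n, b' ≠ c' → a = b' * c' → ({b', c'} : Set M) = {b, c})

theorem eval_mem_closure {α : Type} {A : Set M} (e : α → M) (h : ∀ x, e x ∈ A) :
    ∀ t : Term α, t.eval e ∈ closure A
  | .var x => mem_closure.base (h x)
  | .mul t s => mem_closure.mul (eval_mem_closure e h t) (eval_mem_closure e h s)

end Steiner

open Steiner
section HyperfreeAux

open List

variable {α : Type}

private lemma hf_exists_max {r : α → α → Prop} (htot : ∀ a b, r a b ∨ r b a)
    (htr : ∀ {a b c}, r a b → r b c → r a c) :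
    ∀ s : Finset α, s.Nonempty → ∃ a ∈ s, ∀ x ∈ s, r x a := by
  classical
  intro s
  refine Finset.induction_on s (by rintro ⟨x, hx⟩; simp at hx) ?_
  intro b s hbs ih _
  rcases s.eq_empty_or_nonempty with rfl | hne
  · refine ⟨b, by simp, ?_⟩
    intro x hxm
    have hxb : x = b := by simpa using hxm
    rw [hxb]
    rcases htot b b with h | h <;> exact h
  · obtain ⟨a, ha, hmax⟩ := ih hne
    rcases htot a b with h | h
    · refine ⟨b, Finset.mem_insert_self _ _, ?_⟩
      intro x hxm
      rcases Finset.mem_insert.1 hxm with rfl | hxs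
      · rcases htot x x with h' | h' <;> exact h'
      · exact htr (hmax x hxs) h
    · refine ⟨a, Finset.mem_insert_of_mem ha, ?_⟩
      intro x hxm
      rcases Finset.mem_insert.1 hxm with rfl | hxs
      · exact h
      · exact hmax x hxs

private lemma hf_elimList [DecidableEq α] (Bl : Set (Finset α))
    (h : ∀ A' : Finset α, A'.Nonempty → ∃ a ∈ A',
        ∀ b₁ ∈ Bl, ∀ b₂ ∈ Bl, ↑b₁ ⊆ (A' : Set α) → ↑b₂ ⊆ (A' : Set α) →
          a ∈ b₁ → a ∈ b₂ → b₁ = b₂) (S : Finset α) :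
    ∃ l : List α, l.Nodup ∧ l.toFinset = S ∧
      ∀ (i : ℕ) (hi : i < l.length),
        ∀ b₁ ∈ Bl, ∀ b₂ ∈ Bl, ↑b₁ ⊆ ((l.take (i+1)).toFinset : Set α) →
          ↑b₂ ⊆ ((l.take (i+1)).toFinset : Set α) →
          l.get ⟨i, hi⟩ ∈ b₁ → l.get ⟨i, hi⟩ ∈ b₂ → b₁ = b₂ := by
  induction S using Finset.strongInduction with
  | _ S ih =>
    rcases S.eq_empty_or_nonempty with rfl | hne
    · exact ⟨[], by simp, by simp, by intro i hi; simp at hi⟩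
    · obtain ⟨a, haS, ha⟩ := h S hne
      obtain ⟨l, hnd, htf, hP⟩ := ih (S.erase a) (Finset.erase_ssubset haS)
      have hal : a ∉ l := by
        intro hmem
        have : a ∈ S.erase a := htf ▸ List.mem_toFinset.2 hmem
        simp at this
      have htf' : (l ++ [a]).toFinset = S := by
        rw [List.toFinset_append, htf, show ([a] : List α).toFinset = {a} from by simp]
        ext x
        simp only [Finset.mem_union, Finset.mem_singleton, Finset.mem_erase]
        constructor
        · rintro (⟨-, hx⟩ | rfl)
          · exact hx
          · exact haS
        · intro hx
          rcases eq_or_ne x a with rfl | hxa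
          · exact Or.inr rfl
          · exact Or.inl ⟨hxa, hx⟩
      refine ⟨l ++ [a], ?_, htf', ?_⟩
      · simp [List.nodup_append, hnd, hal]; exact fun x hx hxa => hal (hxa ▸ hx)
      · intro i hi b₁ hb₁ b₂ hb₂ hsub₁ hsub₂ hm₁ hm₂
        have hi' : i < l.length + 1 := by simpa using hi
        rcases lt_or_ge i l.length with hil | hil
        · have htake : (l ++ [a]).take (i+1) = l.take (i+1) :=
            List.take_append_of_le_length hil
          have hget : (l ++ [a]).get ⟨i, hi⟩ = l.get ⟨i, hil⟩ := by simp [List.getElem_append_left hil]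
          rw [htake] at hsub₁ hsub₂
          rw [hget] at hm₁ hm₂
          exact hP i hil b₁ hb₁ b₂ hb₂ hsub₁ hsub₂ hm₁ hm₂
        · have hieq : i = l.length := by omega
          subst hieq
          have hget : (l ++ [a]).get ⟨l.length, hi⟩ = a := by simp
          have htake : (l ++ [a]).take (l.length + 1) = l ++ [a] := by
            apply List.take_of_length_le; simp
          rw [htake, htf'] at hsub₁ hsub₂
          rw [hget] at hm₁ hm₂
          exact ha b₁ hb₁ b₂ hb₂ hsub₁ hsub₂ hm₁ hm₂

end HyperfreeAux

/-- A partial Steiner triple system admits a hyperfree ordering iff it is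
unconfined. -/
theorem stmt10 {α : Type} (Bl : Set (Finset α))
    (hcard : ∀ b ∈ Bl, b.card = 3)
    (hsts : ∀ b₁ ∈ Bl, ∀ b₂ ∈ Bl, ∀ x y : α, x ≠ y →
      x ∈ b₁ → y ∈ b₁ → x ∈ b₂ → y ∈ b₂ → b₁ = b₂) :
    (∃ r : α → α → Prop, IsLinearOrder α r ∧
        ∀ a : α, ∀ b₁ ∈ Bl, ∀ b₂ ∈ Bl, a ∈ b₁ → a ∈ b₂ →
          (∀ x ∈ b₁, x ≠ a → r x a) → (∀ x ∈ b₂, x ≠ a → r x a) → b₁ = b₂) ↔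
      (∀ A' : Finset α, A'.Nonempty → ∃ a ∈ A',
        ∀ b₁ ∈ Bl, ∀ b₂ ∈ Bl, ↑b₁ ⊆ (A' : Set α) → ↑b₂ ⊆ (A' : Set α) →
          a ∈ b₁ → a ∈ b₂ → b₁ = b₂) := by
  classical
  constructor
  · rintro ⟨r, hlin, hfree⟩ A' hA'
    obtain ⟨a, haA, hmax⟩ := hf_exists_max (fun a b => hlin.toTotal.total a b)
      (fun h1 h2 => hlin.toIsPartialOrder.toIsPreorder.trans _ _ _ h1 h2) A' hA'
    refine ⟨a, haA, fun b₁ hb₁ b₂ hb₂ hs₁ hs₂ hm₁ hm₂ => ?_⟩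
    exact hfree a b₁ hb₁ b₂ hb₂ hm₁ hm₂
      (fun x hx _ => hmax x (hs₁ hx)) (fun x hx _ => hmax x (hs₂ hx))
  · intro hunconf
    letI : LinearOrder α := IsWellOrder.linearOrder WellOrderingRel
    choose L hnd htf hP using hf_elimList Bl hunconf
    haveI : (Filter.atTop : Filter (Finset α)).NeBot := Filter.atTop_neBot
    set U : Ultrafilter (Finset α) := Ultrafilter.of Filter.atTop with hUdef
    have hU : ↑U ≤ (Filter.atTop : Filter (Finset α)) := Ultrafilter.of_le _
    refine ⟨fun x y => {S : Finset α | toLex (List.idxOf x (L S), x) ≤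
      toLex (List.idxOf y (L S), y)} ∈ U, ?_, ?_⟩
    · refine { refl := ?_, trans := ?_, antisymm := ?_, total := ?_ }
      · intro a
        have he : {S : Finset α | toLex (List.idxOf a (L S), a) ≤
            toLex (List.idxOf a (L S), a)} = Set.univ :=
          Set.eq_univ_of_forall (fun S => by
            simp only [Set.mem_setOf_eq]
            exact le_rfl)
        rw [he]
        exact Filter.univ_mem
      · intro a b c h1 h2
        exact Filter.mem_of_superset (Filter.inter_mem h1 h2)
          (fun S hS => by
            have h1 := hS.1
            have h2 := hS.2
            simp only [Set.mem_setOf_eq] at h1 h2 ⊢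
            exact le_trans h1 h2)
      · intro a b h1 h2
        obtain ⟨S, hS1, hS2⟩ := Ultrafilter.nonempty_of_mem (Filter.inter_mem h1 h2)
        exact congrArg (fun p : Lex (ℕ × α) => (ofLex p).2) (le_antisymm hS1 hS2)
      · intro a b
        by_cases hab : {S : Finset α | toLex (List.idxOf a (L S), a) ≤
            toLex (List.idxOf b (L S), b)} ∈ U
        · exact Or.inl hab
        · refine Or.inr (Filter.mem_of_superset
            (Ultrafilter.compl_mem_iff_notMem.2 hab) ?_)
          intro S hS
          simp only [Set.mem_compl_iff, Set.mem_setOf_eq] at hS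
          simp only [Set.mem_setOf_eq]
          exact le_of_not_ge hS
    · intro a b₁ hb₁ b₂ hb₂ hm₁ hm₂ hlt₁ hlt₂
      have hW : ({S : Finset α | b₁ ∪ b₂ ⊆ S} ∩
          ⋂ x ∈ (b₁ ∪ b₂).erase a, {S : Finset α | toLex (List.idxOf x (L S), x) ≤
            toLex (List.idxOf a (L S), a)}) ∈ U := by
        apply Filter.inter_mem
        · exact hU (Filter.mem_atTop (b₁ ∪ b₂))
        · rw [Filter.biInter_finset_mem]
          intro x hx
          obtain ⟨hxne, hxT⟩ := Finset.mem_erase.1 hx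
          rcases Finset.mem_union.1 hxT with h | h
          · exact hlt₁ x h hxne
          · exact hlt₂ x h hxne
      obtain ⟨S, hTS, hbelow⟩ := Ultrafilter.nonempty_of_mem hW
      rw [Set.mem_iInter₂] at hbelow
      have haS : a ∈ L S := by
        rw [← List.mem_toFinset, htf S]
        exact hTS (Finset.mem_union_left _ hm₁)
      have hia : List.idxOf a (L S) < (L S).length := List.idxOf_lt_length_iff.2 haS
      have hkey : ∀ b : Finset α, b ⊆ b₁ ∪ b₂ → a ∈ b →
          ↑b ⊆ (((L S).take (List.idxOf a (L S) + 1)).toFinset : Set α) := by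
        intro b hbT hab x hx
        have hxT : x ∈ b₁ ∪ b₂ := hbT hx
        have hxS : x ∈ L S := by
          rw [← List.mem_toFinset, htf S]; exact hTS hxT
        have hxlt : List.idxOf x (L S) < List.idxOf a (L S) + 1 := by
          by_cases hxa : x = a
          · subst hxa; omega
          · have hrx := hbelow x (Finset.mem_erase.2 ⟨hxa, hxT⟩)
            rcases Prod.Lex.le_iff.1 hrx with hlt | ⟨heq, _⟩
            · simp only [ofLex_toLex] at hlt; omega
            · exact absurd ((List.idxOf_inj hxS).1 heq) hxa
        have hxlen : List.idxOf x (L S) < (L S).length := List.idxOf_lt_length_iff.2 hxS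
        have hxin : x ∈ (L S).take (List.idxOf a (L S) + 1) := by
          have hl : List.idxOf x (L S) < ((L S).take (List.idxOf a (L S) + 1)).length := by
            simp; omega
          have := List.getElem_mem hl
          rwa [List.getElem_take, List.getElem_idxOf] at this
        exact Finset.mem_coe.2 (List.mem_toFinset.2 hxin)
      have hga : (L S).get ⟨List.idxOf a (L S), hia⟩ = a := List.idxOf_get hia
      refine hP S (List.idxOf a (L S)) hia b₁ hb₁ b₂ hb₂
        (hkey b₁ Finset.subset_union_left hm₁)
        (hkey b₂ Finset.subset_union_right hm₂) ?_ ?_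
      · rw [hga]; exact hm₁
      · rw [hga]; exact hm₂
end

section
/- Every finitely generated unconfined Steiner triple system is a free Steiner quasigroup. -/
/-!
Take a generating set `B` of minimum size. Peeling off points that lie on at most one block shows
that every finite `X` has a generating subset of size at most `δ(X)`, so `δ(X) ≥ |B|` whenever
`B ⊆ X`. Write each element `w` of a level over `B` that is not in `B` as a product `p * q` of
elements of lower levels: the blocks `{p, q, w}` are `|X \ B|` distinct blocks of the level `X`,
hence all of its blocks. This forbids every coincidence excluded by a standard free construction,
and over a standard free construction a map on `B` extends, level by level, to a homomorphism.
-/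

namespace Steiner

variable {M : Type} [Steiner M]

theorem mul_mul_self_right (x y : M) : x * y * y = x := by
  rw [comm (x * y), comm x, lcancel]

theorem left_ne_mul {x y : M} (h : x ≠ y) : x ≠ x * y :=
  fun hx => h (by rw [← lcancel x y, ← hx, idem])

theorem right_ne_mul {x y : M} (h : x ≠ y) : y ≠ x * y := by
  rw [comm]
  exact left_ne_mul h.symm

theorem mul_eq_mul_of_pair_eq {α N : Type} [Steiner N] (φ : α → N) {p q p' q' : α}
    (h : ({p, q} : Set α) = {p', q'}) : φ p * φ q = φ p' * φ q' := by
  rcases Set.pair_eq_pair_iff.1 h with ⟨rfl, rfl⟩ | ⟨rfl, rfl⟩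
  · rfl
  · exact comm _ _

section Closure

theorem subset_closure (S : Set M) : S ⊆ closure S := fun _ => mem_closure.base

theorem closure_subset_iff {S T : Set M} : closure S ⊆ closure T ↔ S ⊆ closure T := by
  refine ⟨(subset_closure S).trans, fun h x hx => ?_⟩
  induction hx with
  | base ha => exact h ha
  | mul _ _ iha ihb => exact mem_closure.mul iha ihb

theorem closure_mono {S T : Set M} (h : S ⊆ T) : closure S ⊆ closure T :=
  closure_subset_iff.2 (h.trans (subset_closure T))

theorem closure_insert_congr {S T : Set M} (h : closure S = closure T) (a : M) :
    closure (insert a S) = closure (insert a T) := by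
  have key : ∀ {S T : Set M}, closure S = closure T →
      closure (insert a S) ⊆ closure (insert a T) := fun h =>
    closure_subset_iff.2 <| Set.insert_subset (subset_closure _ (Set.mem_insert a _))
      ((subset_closure _).trans (h ▸ closure_mono (Set.subset_insert a _)))
  exact (key h).antisymm (key h.symm)

end Closure

section Level

variable {A : Set M}

theorem mem_level_succ {n : ℕ} {z : M} :
    z ∈ level A (n + 1) ↔ ∃ a ∈ level A n, ∃ b ∈ level A n, z = a * b := Iff.rfl

theorem level_zero : level A 0 = A := rfl

theorem level_mono : Monotone (level A) :=
  monotone_nat_of_le_succ fun _ x hx => mem_level_succ.2 ⟨x, hx, x, hx, (idem x).symm⟩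

theorem level_finite (hA : A.Finite) (n : ℕ) : (level A n).Finite := by
  induction n with
  | zero => exact hA
  | succ n ih =>
    refine (ih.image2 (· * ·) ih).subset ?_
    rintro z ⟨a, ha, b, hb, rfl⟩
    exact Set.mem_image2_of_mem ha hb

theorem exists_mem_level {x : M} (hx : x ∈ closure A) : ∃ n, x ∈ level A n := by
  induction hx with
  | base ha => exact ⟨0, ha⟩
  | mul _ _ iha ihb =>
    obtain ⟨m, hm⟩ := iha
    obtain ⟨k, hk⟩ := ihb
    exact ⟨max m k + 1, mem_level_succ.2 ⟨_, level_mono (le_max_left m k) hm, _,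
      level_mono (le_max_right m k) hk, rfl⟩⟩

/-- Junk value `0` if `x` lies in no level. -/
noncomputable def height (A : Set M) (x : M) : ℕ := sInf {n | x ∈ level A n}

variable (hA : closure A = Set.univ)
include hA

theorem mem_level_height (x : M) : x ∈ level A (height A x) :=
  Nat.sInf_mem (exists_mem_level (hA ▸ Set.mem_univ x))

theorem mem_level_iff_height_le {x : M} {n : ℕ} : x ∈ level A n ↔ height A x ≤ n :=
  ⟨fun h => Nat.sInf_le h, fun h => level_mono h (mem_level_height hA x)⟩

theorem height_eq_zero_iff {x : M} : height A x = 0 ↔ x ∈ A := by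
  rw [← Nat.le_zero, ← mem_level_iff_height_le hA, level_zero]

end Level

section Extension

variable {A : Set M} {N : Type} [Steiner N] (f : A → N)

open Classical in
/-- Any choice of factors will do: in a standard free construction they are unique up to order. -/
noncomputable def extend : (n : ℕ) → level A n → N
  | 0, x => f x
  | n + 1, x =>
    if h : x.1 ∈ level A n then extend n ⟨x, h⟩
    else extend n ⟨_, (mem_level_succ.1 x.2).choose_spec.1⟩ *
      extend n ⟨_, (mem_level_succ.1 x.2).choose_spec.2.choose_spec.1⟩

theorem extend_of_le {x : M} {m n : ℕ} (hx : x ∈ level A m) (hmn : m ≤ n) :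
    extend f n ⟨x, level_mono hmn hx⟩ = extend f m ⟨x, hx⟩ := by
  induction n, hmn using Nat.le_induction with
  | base => rfl
  | succ n hmn ih => rw [extend, dif_pos (level_mono hmn hx), ih]

variable (hA : closure A = Set.univ)

noncomputable def lift (x : M) : N := extend f (height A x) ⟨x, mem_level_height hA x⟩

theorem extend_eq_lift {x : M} {n : ℕ} (hx : x ∈ level A n) :
    extend f n ⟨x, hx⟩ = lift f hA x :=
  extend_of_le f _ ((mem_level_iff_height_le hA).1 hx)

theorem lift_of_mem {a : M} (ha : a ∈ A) : lift f hA a = f ⟨a, ha⟩ := by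
  rw [← extend_eq_lift f hA (show a ∈ level A 0 from ha)]
  rfl

theorem pair_eq_of_stdFree (hS : StdFree A (level A)) {x p q p' q' : M} {n : ℕ}
    (hx : x ∉ level A n) (hp : p ∈ level A n) (hq : q ∈ level A n) (hpq : x = p * q)
    (hp' : p' ∈ level A n) (hq' : q' ∈ level A n) (hpq' : x = p' * q') :
    ({p, q} : Set M) = {p', q'} := by
  have ne_of_eq_mul : ∀ {a b : M}, a ∈ level A n → x = a * b → a ≠ b := by
    rintro a b ha rfl rfl
    exact hx ((idem a).symm ▸ ha)
  obtain ⟨b, hb, c, hc, -, -, huniq⟩ :=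
    hS.2.2.2.2 n x ⟨p, hp, q, hq, hpq⟩ hx
  rw [huniq p hp q hq (ne_of_eq_mul hp hpq) hpq, huniq p' hp' q' hq' (ne_of_eq_mul hp' hpq') hpq']

theorem lift_eq_mul (hS : StdFree A (level A)) {x p q : M} {n : ℕ} (hx : x ∉ level A n)
    (hp : p ∈ level A n) (hq : q ∈ level A n) (hpq : x = p * q) :
    lift f hA x = lift f hA p * lift f hA q := by
  have hx1 : x ∈ level A (n + 1) := ⟨p, hp, q, hq, hpq⟩
  have hp' := (mem_level_succ.1 hx1).choose_spec.1
  obtain ⟨hq', hpq'⟩ := (mem_level_succ.1 hx1).choose_spec.2.choose_spec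
  rw [← extend_eq_lift f hA hx1, extend, dif_neg hx, extend_eq_lift f hA, extend_eq_lift f hA]
  exact mul_eq_mul_of_pair_eq _ (pair_eq_of_stdFree hS hx hp' hq' hpq' hp hq hpq)

theorem lift_mul (hS : StdFree A (level A)) (x y : M) :
    lift f hA (x * y) = lift f hA x * lift f hA y := by
  wlog hyx : height A y ≤ height A x generalizing x y
  · rw [comm x, this y x (le_of_not_ge hyx), comm]
  obtain ⟨-, -, h3, h4, -⟩ := id hS
  rcases eq_or_ne x y with rfl | hxy
  · rw [idem, idem]
  have hx := mem_level_height hA x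
  have hy := (mem_level_iff_height_le hA).2 hyx
  by_cases hxy' : x * y ∈ level A (height A x)
  swap
  · exact lift_eq_mul f hA hS hxy' hx hy rfl
  obtain ⟨m, hm⟩ : ∃ m, height A x = m + 1 := by
    refine Nat.exists_eq_succ_of_ne_zero fun h0 => ?_
    rw [h0] at hx hy hxy'
    exact h3 x hx y hy hxy hxy'
  rw [hm] at hx hy hxy'
  have hxm : x ∉ level A m := by rw [mem_level_iff_height_le hA]; omega
  -- the new element `x` cannot meet another new element, so `y` and `x * y` are both old
  have hym : y ∈ level A m := by
    by_contra hym
    exact h4 m x hx hxm y hy hym hxy hxy'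
  have hxym : x * y ∈ level A m := by
    by_contra hxym
    exact h4 m x hx hxm (x * y) hxy' hxym (left_ne_mul hxy) (by rwa [lcancel])
  have hx_eq := lift_eq_mul f hA hS hxm hym hxym (by rw [comm x, lcancel])
  rw [hx_eq, comm (lift f hA y), mul_mul_self_right]

end Extension

theorem freeBase_of_stdFree {A : Set M} (hA : closure A = Set.univ) (hS : StdFree A (level A)) :
    FreeBase A :=
  ⟨hA, fun _ _ f => ⟨⟨lift f hA, lift_mul f hA hS⟩, fun a => lift_of_mem f hA a.2⟩⟩

section Blocks

open Finset

variable [DecidableEq M]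

open Classical in
noncomputable def blocks (X : Finset M) : Finset (Finset M) :=
  X.powerset.filter fun s => ∃ p ∈ X, ∃ q ∈ X, p ≠ q ∧ p * q ∈ X ∧ s = {p, q, p * q}

theorem mem_blocks {X : Finset M} {s : Finset M} :
    s ∈ blocks X ↔ ∃ p ∈ X, ∃ q ∈ X, p ≠ q ∧ p * q ∈ X ∧ s = {p, q, p * q} := by
  refine mem_filter.trans ⟨And.right, fun h => ⟨mem_powerset.2 ?_, h⟩⟩
  obtain ⟨p, hp, q, hq, -, hpq, rfl⟩ := h
  simp [insert_subset_iff, hp, hq, hpq]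

@[simp]
theorem blocks_empty : blocks (∅ : Finset M) = ∅ := by
  ext s
  simp [mem_blocks]

theorem exists_eq_mul_of_mem_blocks {X s : Finset M} (hs : s ∈ blocks X) {a : M} (ha : a ∈ s) :
    ∃ b ∈ X, ∃ c ∈ X, b ≠ c ∧ a = b * c ∧ s = {a, b, c} := by
  obtain ⟨p, hp, q, hq, hpq, hpqX, rfl⟩ := mem_blocks.1 hs
  simp only [mem_insert, mem_singleton] at ha
  rcases ha with rfl | rfl | rfl
  · exact ⟨q, hq, a * q, hpqX, right_ne_mul hpq, by rw [comm a, lcancel], rfl⟩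
  · exact ⟨p, hp, p * a, hpqX, left_ne_mul hpq, (lcancel p a).symm, by ext; simp; tauto⟩
  · exact ⟨p, hp, q, hq, hpq, rfl, by ext; simp; tauto⟩

theorem blocks_erase (X : Finset M) (a : M) :
    blocks (X.erase a) = (blocks X).filter (a ∉ ·) := by
  ext s
  simp only [mem_filter, mem_blocks, mem_erase]
  constructor
  · rintro ⟨p, ⟨hpa, hp⟩, q, ⟨hqa, hq⟩, hpq, ⟨hpqa, hpqX⟩, rfl⟩
    refine ⟨⟨p, hp, q, hq, hpq, hpqX, rfl⟩, ?_⟩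
    simp only [mem_insert, mem_singleton, not_or]
    exact ⟨Ne.symm hpa, Ne.symm hqa, Ne.symm hpqa⟩
  · rintro ⟨⟨p, hp, q, hq, hpq, hpqX, rfl⟩, ha⟩
    simp only [mem_insert, mem_singleton, not_or] at ha
    exact ⟨p, ⟨Ne.symm ha.1, hp⟩, q, ⟨Ne.symm ha.2.1, hq⟩, hpq, ⟨Ne.symm ha.2.2, hpqX⟩, rfl⟩

theorem card_blocks_eq (X : Finset M) (a : M) :
    #(blocks X) = #(blocks (X.erase a)) + #((blocks X).filter (a ∈ ·)) := by
  rw [blocks_erase, add_comm, card_filter_add_card_filter_not]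

def OnAtMostOneBlock (X : Finset M) (a : M) : Prop :=
  ∀ b c b' c' : M, b ∈ X → c ∈ X → b' ∈ X → c' ∈ X →
    b ≠ c → a = b * c → b' ≠ c' → a = b' * c' → ({b, c} : Set M) = {b', c'}

def Unconfined (M : Type) [Steiner M] : Prop :=
  ∀ X : Finset M, X.Nonempty → ∃ a ∈ X, OnAtMostOneBlock X a

theorem OnAtMostOneBlock.card_filter_mem_blocks_le_one {X : Finset M} {a : M}
    (ha : OnAtMostOneBlock X a) : #((blocks X).filter (a ∈ ·)) ≤ 1 := by
  refine card_le_one.2 fun s hs t ht => ?_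
  obtain ⟨b, hb, c, hc, hbc, habc, rfl⟩ := exists_eq_mul_of_mem_blocks (mem_filter.1 hs).1
    (mem_filter.1 hs).2
  obtain ⟨b', hb', c', hc', hbc', habc', rfl⟩ := exists_eq_mul_of_mem_blocks (mem_filter.1 ht).1
    (mem_filter.1 ht).2
  have h := ha b c b' c' hb hc hb' hc' hbc habc hbc' habc'
  rw [← coe_pair, ← coe_pair, coe_inj] at h
  rw [h]

theorem filter_mem_blocks_eq_empty {X : Finset M} {a : M}
    (ha : ¬ ∃ b ∈ X, ∃ c ∈ X, b ≠ c ∧ a = b * c) : (blocks X).filter (a ∈ ·) = ∅ :=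
  filter_eq_empty_iff.2 fun s hs has => by
    obtain ⟨b, hb, c, hc, hbc, habc, -⟩ := exists_eq_mul_of_mem_blocks hs has
    exact ha ⟨b, hb, c, hc, hbc, habc⟩

theorem closure_erase_of_eq_mul {X : Finset M} {a b c : M} (hb : b ∈ X) (hc : c ∈ X)
    (hbc : b ≠ c) (habc : a = b * c) : closure (X.erase a : Set M) = closure X := by
  refine (closure_mono (coe_subset.2 (erase_subset a X))).antisymm
    (closure_subset_iff.2 fun x hx => ?_)
  rcases eq_or_ne x a with rfl | hxa
  · rw [habc]
    exact mem_closure.mul (mem_closure.base (mem_erase.2 ⟨left_ne_mul hbc, hb⟩))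
      (mem_closure.base (mem_erase.2 ⟨right_ne_mul hbc, hc⟩))
  · exact mem_closure.base (mem_erase.2 ⟨hxa, hx⟩)

/-- Peel off, one at a time, points lying on at most one block: a point on a block is generated
by the rest and takes one block with it, a point on no block is kept. -/
theorem Unconfined.exists_subset_closure_eq (huncf : Unconfined M) (X : Finset M) :
    ∃ Y ⊆ X, closure (Y : Set M) = closure X ∧ #Y + #(blocks X) ≤ #X := by
  induction X using Finset.strongInduction with
  | H X ih =>
  rcases X.eq_empty_or_nonempty with rfl | hne
  · exact ⟨∅, subset_rfl, rfl, by simp⟩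
  obtain ⟨a, haX, ha⟩ := huncf X hne
  obtain ⟨Y, hYX, hY, hcard⟩ := ih (X.erase a) (erase_ssubset haX)
  have hX := card_erase_add_one haX
  have hblocks := card_blocks_eq X a
  by_cases hfac : ∃ b ∈ X, ∃ c ∈ X, b ≠ c ∧ a = b * c
  · obtain ⟨b, hb, c, hc, hbc, habc⟩ := hfac
    have := ha.card_filter_mem_blocks_le_one
    exact ⟨Y, hYX.trans (erase_subset a X), hY.trans (closure_erase_of_eq_mul hb hc hbc habc),
      by omega⟩
  · rw [filter_mem_blocks_eq_empty hfac, card_empty] at hblocks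
    refine ⟨insert a Y, insert_subset haX (hYX.trans (erase_subset a X)), ?_, ?_⟩
    · rw [coe_insert, closure_insert_congr hY, ← coe_insert, insert_erase haX]
    · have := card_insert_le a Y
      omega

end Blocks

def IsLowerFactorization (A : Set M) (r : M → M × M) : Prop :=
  ∀ w ∉ A, w = (r w).1 * (r w).2 ∧ height A (r w).1 < height A w ∧ height A (r w).2 < height A w

theorem exists_isLowerFactorization {A : Set M} (hA : closure A = Set.univ) :
    ∃ r, IsLowerFactorization A r := by
  have h : ∀ w : M, ∃ pq : M × M, w ∉ A →
      w = pq.1 * pq.2 ∧ height A pq.1 < height A w ∧ height A pq.2 < height A w := by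
    intro w
    by_cases hwA : w ∈ A
    · exact ⟨(w, w), absurd hwA⟩
    obtain ⟨m, hm⟩ := Nat.exists_eq_succ_of_ne_zero (mt (height_eq_zero_iff hA).1 hwA)
    obtain ⟨p, hp, q, hq, rfl⟩ := mem_level_succ.1 (hm ▸ mem_level_height hA w)
    rw [mem_level_iff_height_le hA] at hp hq
    exact ⟨(p, q), fun _ => ⟨rfl, by dsimp only; omega, by dsimp only; omega⟩⟩
  choose r hr using h
  exact ⟨r, hr⟩

namespace IsLowerFactorization

variable {A : Set M} {r : M → M × M} (hr : IsLowerFactorization A r)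
include hr

theorem fst_ne_snd {w : M} (hw : w ∉ A) : (r w).1 ≠ (r w).2 := by
  intro h
  obtain ⟨hw_eq, hlt, -⟩ := hr w hw
  rw [← h, idem] at hw_eq
  rw [← hw_eq] at hlt
  exact lt_irrefl _ hlt

theorem height_lt [DecidableEq M] {w u : M} (hw : w ∉ A)
    (hu : u ∈ ({(r w).1, (r w).2, w} : Finset M)) (huw : u ≠ w) : height A u < height A w := by
  simp only [Finset.mem_insert, Finset.mem_singleton] at hu
  rcases hu with rfl | rfl | rfl
  exacts [(hr w hw).2.1, (hr w hw).2.2, absurd rfl huw]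

theorem eq_of_notMem_level (hA : closure A = Set.univ) [DecidableEq M] {w u : M} {n : ℕ}
    (hw : w ∉ A) (hwn : height A w ≤ n + 1) (hu : u ∈ ({(r w).1, (r w).2, w} : Finset M))
    (hun : u ∉ level A n) : u = w := by
  by_contra huw
  have := hr.height_lt hw hu huw
  rw [mem_level_iff_height_le hA] at hun
  omega

end IsLowerFactorization

section Minimal

open Finset

variable [DecidableEq M] {B : Finset M} (huncf : Unconfined M)
  (hB : closure (B : Set M) = Set.univ)
  (hmin : ∀ Y : Finset M, closure (Y : Set M) = Set.univ → #B ≤ #Y)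
include huncf hB hmin

theorem card_add_card_blocks_le {X : Finset M} (hBX : B ⊆ X) : #B + #(blocks X) ≤ #X := by
  obtain ⟨Y, hYX, hY, hcard⟩ := huncf.exists_subset_closure_eq X
  have hYgen : closure (Y : Set M) = Set.univ :=
    Set.eq_univ_of_univ_subset (hB ▸ hY ▸ closure_mono (coe_subset.2 hBX))
  have := hmin Y hYgen
  omega

/-- The `|X \ B|` blocks `{p, q, w}` given by `r` are distinct, and `δ(X) ≥ |B|` leaves no room
for any other block. -/
theorem exists_eq_factor_block {r : M → M × M} (hr : IsLowerFactorization B r) {X : Finset M}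
    (hBX : B ⊆ X) (hX : ∀ w ∈ X, w ∉ B → (r w).1 ∈ X ∧ (r w).2 ∈ X)
    {s : Finset M} (hs : s ∈ blocks X) :
    ∃ w ∈ X, w ∉ B ∧ s = {(r w).1, (r w).2, w} := by
  have hmaps : Set.MapsTo (fun w => ({(r w).1, (r w).2, w} : Finset M)) (↑(X \ B) : Set M)
      (↑(blocks X) : Set (Finset M)) := by
    intro w hw
    obtain ⟨hwX, hwB⟩ := mem_sdiff.1 hw
    have hwr := (hr w (mod_cast hwB)).1
    obtain ⟨h1, h2⟩ := hX w hwX hwB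
    exact mem_blocks.2 ⟨_, h1, _, h2, hr.fst_ne_snd (mod_cast hwB), hwr ▸ hwX, by rw [← hwr]⟩
  have hinj : Set.InjOn (fun w => ({(r w).1, (r w).2, w} : Finset M)) (↑(X \ B) : Set M) := by
    intro v hv w hw hvw
    by_contra hne
    have hvB : v ∉ (B : Set M) := mod_cast (mem_sdiff.1 hv).2
    have hwB : w ∉ (B : Set M) := mod_cast (mem_sdiff.1 hw).2
    have hvw' : height B v < height B w := hr.height_lt hwB (by
      simp only at hvw; rw [← hvw]; simp) hne
    have hwv : height B w < height B v := hr.height_lt hvB (by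
      simp only at hvw; rw [hvw]; simp) (Ne.symm hne)
    omega
  have hcard : #(blocks X) ≤ #(X \ B) := by
    have := card_add_card_blocks_le huncf hB hmin hBX
    rw [card_sdiff_of_subset hBX]
    omega
  obtain ⟨w, hw, rfl⟩ := surjOn_of_injOn_of_card_le _ hmaps hinj hcard hs
  exact ⟨w, (mem_sdiff.1 hw).1, (mem_sdiff.1 hw).2, rfl⟩

theorem exists_eq_factor_block_of_mem_level {r : M → M × M} (hr : IsLowerFactorization B r)
    {n : ℕ} {p q : M} (hp : p ∈ level B n) (hq : q ∈ level B n) (hpq : p ≠ q)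
    (hpqn : p * q ∈ level B n) :
    ∃ w, w ∉ B ∧ height B w ≤ n ∧ ({p, q, p * q} : Finset M) = {(r w).1, (r w).2, w} := by
  obtain ⟨X, hX⟩ := (level_finite B.finite_toSet n).exists_finset_coe
  have hmem : ∀ {x}, x ∈ X ↔ height B x ≤ n := by
    intro x
    rw [← mem_coe, hX, mem_level_iff_height_le hB]
  have hBX : B ⊆ X := fun b hb => hmem.2 (by rw [(height_eq_zero_iff hB).2 hb]; omega)
  have hXr : ∀ w ∈ X, w ∉ B → (r w).1 ∈ X ∧ (r w).2 ∈ X := fun w hw hwB => by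
    have := hmem.1 hw
    have := hr w (mod_cast hwB)
    exact ⟨hmem.2 (by omega), hmem.2 (by omega)⟩
  rw [mem_level_iff_height_le hB, ← hmem] at hp hq hpqn
  obtain ⟨w, hwX, hwB, hw⟩ :=
    exists_eq_factor_block huncf hB hmin hr hBX hXr (mem_blocks.2 ⟨p, hp, q, hq, hpq, hpqn, rfl⟩)
  exact ⟨w, mod_cast hwB, hmem.1 hwX, hw⟩

theorem mul_notMem_of_mem {b c : M} (hb : b ∈ B) (hc : c ∈ B) (hbc : b ≠ c) : b * c ∉ B := by
  intro hbcB
  obtain ⟨r, hr⟩ := exists_isLowerFactorization hB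
  obtain ⟨w, hwB, hw0, -⟩ :=
    exists_eq_factor_block_of_mem_level huncf hB hmin hr (n := 0) hb hc hbc hbcB
  exact hwB ((height_eq_zero_iff hB).1 (Nat.le_zero.1 hw0))

theorem mul_notMem_level_succ {n : ℕ} {x y : M} (hx : x ∈ level B (n + 1)) (hxn : x ∉ level B n)
    (hy : y ∈ level B (n + 1)) (hyn : y ∉ level B n) (hxy : x ≠ y) :
    x * y ∉ level B (n + 1) := by
  intro hxyn
  obtain ⟨r, hr⟩ := exists_isLowerFactorization hB
  obtain ⟨w, hwB, hwn, hw⟩ := exists_eq_factor_block_of_mem_level huncf hB hmin hr hx hy hxy hxyn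
  have hxw := hr.eq_of_notMem_level hB hwB hwn (hw ▸ by simp) hxn
  have hyw := hr.eq_of_notMem_level hB hwB hwn (hw ▸ by simp) hyn
  exact hxy (hxw.trans hyw.symm)

theorem pair_eq_of_notMem_level {r : M → M × M} (hr : IsLowerFactorization B r) {n : ℕ}
    {b c : M} (hb : b ∈ level B n) (hc : c ∈ level B n) (hbc : b ≠ c) (hbcn : b * c ∉ level B n) :
    ({b, c} : Set M) = {(r (b * c)).1, (r (b * c)).2} := by
  have hb' := level_mono n.le_succ hb
  have hc' := level_mono n.le_succ hc
  obtain ⟨w, hwB, hwn, hw⟩ :=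
    exists_eq_factor_block_of_mem_level huncf hB hmin hr hb' hc' hbc ⟨b, hb, c, hc, rfl⟩
  obtain rfl := hr.eq_of_notMem_level hB hwB hwn (hw ▸ by simp) hbcn
  have hfactor : ∀ u, u ≠ b * c → u ∈ ({b, c, b * c} : Finset M) →
      u = (r (b * c)).1 ∨ u = (r (b * c)).2 := by
    intro u hu hmem
    rw [hw] at hmem
    simpa [hu] using hmem
  have := hfactor b (left_ne_mul hbc) (by simp)
  have := hfactor c (right_ne_mul hbc) (by simp)
  rw [Set.pair_eq_pair_iff]
  grind

theorem stdFree_level : StdFree (B : Set M) (level B) := by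
  obtain ⟨r, hr⟩ := exists_isLowerFactorization hB
  refine ⟨rfl, fun _ => rfl, fun b hb c hc => mul_notMem_of_mem huncf hB hmin hb hc,
    fun n x hx hxn y hy hyn => mul_notMem_level_succ huncf hB hmin hx hxn hy hyn, ?_⟩
  intro n z hz hzn
  obtain ⟨b, hb, c, hc, rfl⟩ := mem_level_succ.1 hz
  have hbc : b ≠ c := by
    rintro rfl
    rw [idem] at hzn
    exact hzn hb
  refine ⟨b, hb, c, hc, hbc, rfl, fun b' hb' c' hc' hbc' h => ?_⟩
  rw [pair_eq_of_notMem_level huncf hB hmin hr hb hc hbc hzn,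
    pair_eq_of_notMem_level huncf hB hmin hr hb' hc' hbc' (h ▸ hzn), h]

end Minimal

end Steiner

open Steiner
/-- Every finitely generated unconfined Steiner quasigroup is free. -/
theorem stmt11 {M : Type} [Steiner M] (A : Finset M)
    (hgen : closure (↑A : Set M) = Set.univ)
    (huncf : ∀ A' : Finset M, A'.Nonempty → ∃ a ∈ A',
      ∀ b c b' c' : M, b ∈ A' → c ∈ A' → b' ∈ A' → c' ∈ A' →
        b ≠ c → a = b * c → b' ≠ c' → a = b' * c' →
        ({b, c} : Set M) = {b', c'}) :
    ∃ B : Set M, FreeBase B := by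
  classical
  obtain ⟨B, hB, hmin⟩ := (InvImage.wf Finset.card wellFounded_lt).has_min
    {Y : Finset M | closure (Y : Set M) = Set.univ} ⟨A, hgen⟩
  exact ⟨B, freeBase_of_stdFree hB
    (stdFree_level huncf hB fun Y hY => not_lt.1 (hmin Y hY))⟩
end

section
/- If t₁·t₂ and r₁·r₂ are terms equivalent up to commutativity (t₁·t₂ ∼ r₁·r₂), then either t₁ ∼ r₁ and t₂ ∼ r₂, or t₁ ∼ r₂ and t₂ ∼ r₁. -/
open Steiner

/-! The relation "same head symbol, and for products the factors agree up to `∼`, possibly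
swapped" is an equivalence relation containing the generators of `∼`, so it contains `∼`. -/

def HeadMatch {α : Type} : Term α → Term α → Prop
  | .var x, .var y => x = y
  | .mul t1 t2, .mul r1 r2 => (TEquiv t1 r1 ∧ TEquiv t2 r2) ∨ (TEquiv t1 r2 ∧ TEquiv t2 r1)
  | _, _ => False

namespace HeadMatch

variable {α : Type}

theorem refl : ∀ t : Term α, HeadMatch t t
  | .var _ => rfl
  | .mul _ _ => .inl ⟨.refl _, .refl _⟩

theorem symm : ∀ {t s : Term α}, HeadMatch t s → HeadMatch s t
  | .var _, .var _, h => Eq.symm h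
  | .mul _ _, .mul _ _, .inl ⟨h1, h2⟩ => .inl ⟨h1.symm, h2.symm⟩
  | .mul _ _, .mul _ _, .inr ⟨h1, h2⟩ => .inr ⟨h2.symm, h1.symm⟩

theorem trans : ∀ {t s u : Term α}, HeadMatch t s → HeadMatch s u → HeadMatch t u
  | .var _, .var _, .var _, h, h' => Eq.trans h h'
  | .mul _ _, .mul _ _, .mul _ _, .inl ⟨a, b⟩, .inl ⟨c, d⟩ => .inl ⟨a.trans c, b.trans d⟩
  | .mul _ _, .mul _ _, .mul _ _, .inl ⟨a, b⟩, .inr ⟨c, d⟩ => .inr ⟨a.trans c, b.trans d⟩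
  | .mul _ _, .mul _ _, .mul _ _, .inr ⟨a, b⟩, .inl ⟨c, d⟩ => .inr ⟨a.trans d, b.trans c⟩
  | .mul _ _, .mul _ _, .mul _ _, .inr ⟨a, b⟩, .inr ⟨c, d⟩ => .inl ⟨a.trans d, b.trans c⟩

end HeadMatch

theorem Steiner.TEquiv.headMatch {α : Type} {t s : Term α} (h : TEquiv t s) : HeadMatch t s := by
  induction h with
  | refl t => exact .refl t
  | symm _ ih => exact ih.symm
  | trans _ _ ih₁ ih₂ => exact ih₁.trans ih₂
  | comm _ _ => exact .inr ⟨.refl _, .refl _⟩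
  | congr h₁ h₂ => exact .inl ⟨h₁, h₂⟩

/-- If `t₁·t₂ ∼ r₁·r₂`, then the factors match up to commutativity. -/
theorem stmt12 {α : Type} {t1 t2 r1 r2 : Term α}
    (h : TEquiv (Term.mul t1 t2) (Term.mul r1 r2)) :
    (TEquiv t1 r1 ∧ TEquiv t2 r2) ∨ (TEquiv t1 r2 ∧ TEquiv t2 r1) :=
  h.headMatch
end

section
/- Let ā be an independent tuple in a Steiner quasigroup with standard free construction (Sₙ). If t is a reduced term of rank k, then t(ā) ∈ S_k ∖ S_{<k}; moreover if r is a reduced term with r(ā) = t(ā), then r ∼ t. -/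
section Aux
open Steiner
variable {M : Type} [Steiner M]

lemma std_mono {A : Set M} {S : ℕ → Set M} (hS : StdFree A S) :
    ∀ {n m : ℕ}, n ≤ m → S n ⊆ S m := by
  have step : ∀ n, S n ⊆ S (n + 1) := by
    intro n x hx
    rw [hS.2.1 n]
    exact ⟨x, hx, x, hx, (Steiner.idem x).symm⟩
  intro n m h
  induction h with
  | refl => exact fun _ h => h
  | step _ ih => exact fun x hx => step _ (ih hx)

lemma tequiv_var_aux {α : Type} {s t : Term α} (h : TEquiv s t) :
    ∀ x, s = Term.var x ↔ t = Term.var x := by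
  induction h with
  | refl => exact fun _ => Iff.rfl
  | symm _ ih => exact fun x => (ih x).symm
  | trans _ _ ih1 ih2 => exact fun x => (ih1 x).trans (ih2 x)
  | comm t s => exact fun x => ⟨(fun h => nomatch h), (fun h => nomatch h)⟩
  | congr _ _ _ _ => exact fun x => ⟨(fun h => nomatch h), (fun h => nomatch h)⟩

lemma tequiv_var {α : Type} {x y : α} (h : TEquiv (Term.var x) (Term.var y)) : x = y := by
  have := (tequiv_var_aux h x).mp rfl
  exact (Term.var.injEq y x ▸ this).symm

lemma Reduced.left' {α : Type} {t s : Term α} (h : Reduced (Term.mul t s)) : Reduced t :=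
  ⟨fun a b hs => h.1 a b (Subterm.left hs),
   fun a b c hs => h.2.1 a b c (Subterm.left hs),
   fun a b c hs => h.2.2 a b c (Subterm.left hs)⟩

lemma Reduced.right' {α : Type} {t s : Term α} (h : Reduced (Term.mul t s)) : Reduced s :=
  ⟨fun a b hs => h.1 a b (Subterm.right hs),
   fun a b c hs => h.2.1 a b c (Subterm.right hs),
   fun a b c hs => h.2.2 a b c (Subterm.right hs)⟩

lemma newmul {A : Set M} {S : ℕ → Set M} (hS : StdFree A S) (n : ℕ) {d x b c : M}
    (hd : d ∈ S n) (hx : x ∉ S n) (hb : b ∈ S n) (hc : c ∈ S n)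
    (hbc : b ≠ c) (hxbc : x = b * c) (hdb : d ≠ b) (hdc : d ≠ c) :
    d * x ∉ S (n + 1) := by
  have hxS : x ∈ S (n + 1) := by rw [hS.2.1 n]; exact ⟨b, hb, c, hc, hxbc⟩
  intro hy
  have key1 : x * (d * x) = d := by rw [Steiner.comm d x, Steiner.lcancel]
  by_cases hyn : d * x ∈ S n
  · have hxy : x = d * (d * x) := (Steiner.lcancel d x).symm
    have hdy : d ≠ d * x := by
      intro h
      apply hx
      rw [hxy, ← h, Steiner.idem]
      exact hd
    obtain ⟨b₀, hb₀, c₀, hc₀, hne₀, heq₀, huniq⟩ := hS.2.2.2.2 n x hxS hx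
    have h1 : ({b, c} : Set M) = {b₀, c₀} := huniq b hb c hc hbc hxbc
    have h2 : ({d, d * x} : Set M) = {b₀, c₀} := huniq d hd (d * x) hyn hdy hxy
    have hmem : d ∈ ({b, c} : Set M) := by
      rw [h1, ← h2]; exact Set.mem_insert _ _
    rcases Set.mem_insert_iff.mp hmem with h | h
    · exact hdb h
    · exact hdc (Set.mem_singleton_iff.mp h)
  · have hxney : x ≠ d * x := by
      intro h
      apply hx
      have : d = x := by rw [← key1, ← h, Steiner.idem]
      rw [← this]; exact hd
    have h4 := hS.2.2.2.1 n x hxS hx (d * x) hy hyn hxney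
    exact h4 (by rw [key1]; exact std_mono hS (Nat.le_succ n) hd)

end Aux


open Steiner in
theorem key_lemma {M : Type} [Steiner M] {ι : Type} (a : ι → M)
    (inj : Function.Injective a) (S : ℕ → Set M) (hS : StdFree (Set.range a) S) :
    ∀ k : ℕ, ∀ t : Term ι, Reduced t → t.rank = k →
      ((t.eval a ∈ S k ∧ ∀ j < k, t.eval a ∉ S j) ∧
       ∀ r : Term ι, Reduced r → r.rank = k → r.eval a = t.eval a → TEquiv r t) := by
  intro k
  induction k using Nat.strong_induction_on with
  | _ k IH =>
  intro t ht hrk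
  cases t with
  | var x =>
    have hk0 : k = 0 := by simpa [Term.rank] using hrk.symm
    subst hk0
    refine ⟨⟨?_, fun j hj => absurd hj (Nat.not_lt_zero j)⟩, ?_⟩
    · show a x ∈ S 0
      rw [hS.1]; exact ⟨x, rfl⟩
    · intro r hr hrrk hev
      cases r with
      | var y =>
        have : y = x := inj hev
        subst this
        exact TEquiv.refl _
      | mul r1 r2 => exact absurd hrrk (by simp [Term.rank])
  | mul t1 t2 =>
    have ht1 : Reduced t1 := Reduced.left' ht
    have ht2 : Reduced t2 := Reduced.right' ht
    subst hrk
    set K := max t1.rank t2.rank with hK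
    have part1 : ∀ s : Term ι, Reduced s → s.rank ≤ K →
        (s.eval a ∈ S s.rank ∧ ∀ j < s.rank, s.eval a ∉ S j) :=
      fun s hs hle => (IH s.rank (Nat.lt_succ_of_le hle) s hs rfl).1
    have memLe : ∀ s : Term ι, Reduced s → s.rank ≤ K → ∀ j, s.rank ≤ j →
        s.eval a ∈ S j :=
      fun s hs hsK j hj => std_mono hS hj (part1 s hs hsK).1
    have eqv : ∀ p q : Term ι, Reduced p → Reduced q →
        p.rank ≤ K → q.rank ≤ K → p.eval a = q.eval a → TEquiv p q := by
      intro p q hp hq hpl hql hev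
      rcases lt_trichotomy p.rank q.rank with h | h | h
      · exact absurd (hev ▸ (part1 p hp hpl).1) ((part1 q hq hql).2 p.rank h)
      · exact (IH q.rank (Nat.lt_succ_of_le hql) q hq rfl).2 p hp h hev
      · exact absurd (hev.symm ▸ (part1 q hq hql).1) ((part1 p hp hpl).2 q.rank h)
    have nev : ∀ p q : Term ι, Reduced p → Reduced q →
        p.rank ≤ K → q.rank ≤ K → ¬ TEquiv p q → p.eval a ≠ q.eval a :=
      fun p q hp hq h1 h2 hne hev => hne (eqv p q hp hq h1 h2 hev)
    have hmem : (Term.mul t1 t2).eval a ∈ S (K + 1) := by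
      rw [hS.2.1]
      exact ⟨_, memLe t1 ht1 (le_max_left _ _) K (le_max_left _ _),
             _, memLe t2 ht2 (le_max_right _ _) K (le_max_right _ _), rfl⟩
    have hnot : (Term.mul t1 t2).eval a ∉ S K := by
      rcases lt_trichotomy t1.rank t2.rank with h | h | h
      · -- rank t1 < rank t2, K = t2.rank
        cases t2 with
        | var y => exact absurd h (by simp [Term.rank])
        | mul u v =>
          have hruv : (Term.mul u v).rank = max u.rank v.rank + 1 := rfl
          have hKeq : K = max u.rank v.rank + 1 := by
            have h2 := h
            rw [hruv] at h2
            rw [hK, hruv]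
            omega
          have hu : Reduced u := Reduced.left' ht2
          have hv : Reduced v := Reduced.right' ht2
          have huK : u.rank ≤ K := by omega
          have hvK : v.rank ≤ K := by omega
          have huK' : u.rank ≤ max u.rank v.rank := le_max_left _ _
          have hvK' : v.rank ≤ max u.rank v.rank := le_max_right _ _
          have hd : t1.eval a ∈ S (max u.rank v.rank) :=
            memLe t1 ht1 (le_of_lt (lt_of_lt_of_le h (le_max_right _ _)))
              (max u.rank v.rank) (by omega)
          have hx : (Term.mul u v).eval a ∉ S (max u.rank v.rank) :=
            (part1 _ ht2 (le_max_right _ _)).2 (max u.rank v.rank)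
              (by simp [Term.rank])
          have hb : u.eval a ∈ S (max u.rank v.rank) := memLe u hu huK _ huK'
          have hc : v.eval a ∈ S (max u.rank v.rank) := memLe v hv hvK _ hvK'
          have hbc : u.eval a ≠ v.eval a :=
            nev u v hu hv huK hvK (ht2.1 u v (Subterm.refl _))
          have hdb : t1.eval a ≠ u.eval a :=
            nev t1 u ht1 hu (le_max_left _ _) huK
              (ht.2.1 t1 u v (Subterm.refl _)).1
          have hdc : t1.eval a ≠ v.eval a :=
            nev t1 v ht1 hv (le_max_left _ _) hvK
              (ht.2.1 t1 u v (Subterm.refl _)).2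
          have := newmul hS (max u.rank v.rank) hd hx hb hc hbc rfl hdb hdc
          rw [hKeq]
          exact this
      · -- equal ranks
        rcases Nat.eq_zero_or_pos t1.rank with h0 | hpos
        · cases t1 with
          | mul u v => exact absurd h0 (by simp [Term.rank])
          | var x1 =>
            cases t2 with
            | mul u v => exact absurd (h0 ▸ h) (by simp [Term.rank])
            | var x2 =>
              have hK0 : K = 0 := by simp [hK, Term.rank]
              have hne : x1 ≠ x2 := by
                intro hxe
                exact ht.1 _ _ (Subterm.refl _) (hxe ▸ TEquiv.refl _)
              have hax : a x1 ≠ a x2 := fun hh => hne (inj hh)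
              have hm1 : a x1 ∈ S 0 := by rw [hS.1]; exact ⟨x1, rfl⟩
              have hm2 : a x2 ∈ S 0 := by rw [hS.1]; exact ⟨x2, rfl⟩
              rw [hK0]
              exact hS.2.2.1 _ hm1 _ hm2 hax
        · obtain ⟨n, hn⟩ : ∃ n, K = n + 1 := ⟨K - 1, by omega⟩
          have h1K : t1.rank = K := by omega
          have h2K : t2.rank = K := by omega
          have hm1 : t1.eval a ∈ S (n + 1) := by
            rw [← hn]; exact memLe t1 ht1 (le_of_eq h1K) K (le_of_eq h1K)
          have hm2 : t2.eval a ∈ S (n + 1) := by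
            rw [← hn]; exact memLe t2 ht2 (le_of_eq h2K) K (le_of_eq h2K)
          have hn1 : t1.eval a ∉ S n := (part1 t1 ht1 (le_of_eq h1K)).2 n (by omega)
          have hn2 : t2.eval a ∉ S n := (part1 t2 ht2 (le_of_eq h2K)).2 n (by omega)
          have hne : t1.eval a ≠ t2.eval a :=
            nev t1 t2 ht1 ht2 (le_of_eq h1K) (le_of_eq h2K)
              (ht.1 t1 t2 (Subterm.refl _))
          have := hS.2.2.2.1 n _ hm1 hn1 _ hm2 hn2 hne
          rw [hn]
          exact this
      · -- rank t2 < rank t1, K = t1.rank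
        cases t1 with
        | var y => exact absurd h (by simp [Term.rank])
        | mul u v =>
          have hruv : (Term.mul u v).rank = max u.rank v.rank + 1 := rfl
          have hKeq : K = max u.rank v.rank + 1 := by
            have h2 := h
            rw [hruv] at h2
            rw [hK, hruv]
            omega
          have hu : Reduced u := Reduced.left' ht1
          have hv : Reduced v := Reduced.right' ht1
          have huK : u.rank ≤ K := by omega
          have hvK : v.rank ≤ K := by omega
          have hd : t2.eval a ∈ S (max u.rank v.rank) :=
            memLe t2 ht2 (le_of_lt (lt_of_lt_of_le h (le_max_left _ _)))
              (max u.rank v.rank) (by omega)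
          have hx : (Term.mul u v).eval a ∉ S (max u.rank v.rank) :=
            (part1 _ ht1 (le_max_left _ _)).2 (max u.rank v.rank)
              (by simp [Term.rank])
          have hb : u.eval a ∈ S (max u.rank v.rank) :=
            memLe u hu huK _ (le_max_left _ _)
          have hc : v.eval a ∈ S (max u.rank v.rank) :=
            memLe v hv hvK _ (le_max_right _ _)
          have hbc : u.eval a ≠ v.eval a :=
            nev u v hu hv huK hvK (ht1.1 u v (Subterm.refl _))
          have hdb : t2.eval a ≠ u.eval a :=
            nev t2 u ht2 hu (le_max_right _ _) huK
              (fun he => (ht.2.2 u v t2 (Subterm.refl _)).1 he.symm)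
          have hdc : t2.eval a ≠ v.eval a :=
            nev t2 v ht2 hv (le_max_right _ _) hvK
              (fun he => (ht.2.2 u v t2 (Subterm.refl _)).2 he.symm)
          have hres := newmul hS (max u.rank v.rank) hd hx hb hc hbc rfl hdb hdc
          rw [hKeq]
          show (Term.mul u v).eval a * t2.eval a ∉ S (max u.rank v.rank + 1)
          rw [Steiner.comm]
          exact hres
    have hrkK : (Term.mul t1 t2).rank = K + 1 := rfl
    refine ⟨⟨hmem, fun j hj hmemj => hnot (std_mono hS (by omega : j ≤ K) hmemj)⟩, ?_⟩
    intro r hr hrrk hev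
    cases r with
    | var y => exact absurd hrrk (by simp [Term.rank])
    | mul r1 r2 =>
      have hr1 : Reduced r1 := Reduced.left' hr
      have hr2 : Reduced r2 := Reduced.right' hr
      have hrK : max r1.rank r2.rank = K := by
        have h1 : (Term.mul r1 r2).rank = max r1.rank r2.rank + 1 := rfl
        omega
      have hr1K : r1.rank ≤ K := by omega
      have hr2K : r2.rank ≤ K := by omega
      have hne_r : r1.eval a ≠ r2.eval a :=
        nev r1 r2 hr1 hr2 hr1K hr2K (hr.1 r1 r2 (Subterm.refl _))
      have hne_t : t1.eval a ≠ t2.eval a :=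
        nev t1 t2 ht1 ht2 (le_max_left _ _) (le_max_right _ _)
          (ht.1 t1 t2 (Subterm.refl _))
      have hev' : r1.eval a * r2.eval a = t1.eval a * t2.eval a := hev
      obtain ⟨b₀, hb₀, c₀, hc₀, hne₀, heq₀, huniq⟩ :=
        hS.2.2.2.2 K ((Term.mul t1 t2).eval a) hmem hnot
      have h1 := huniq (t1.eval a) (memLe t1 ht1 (le_max_left _ _) K (le_max_left _ _))
        (t2.eval a) (memLe t2 ht2 (le_max_right _ _) K (le_max_right _ _)) hne_t rfl
      have h2 := huniq (r1.eval a) (memLe r1 hr1 hr1K K hr1K)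
        (r2.eval a) (memLe r2 hr2 hr2K K hr2K) hne_r hev'.symm
      have hset : ({r1.eval a, r2.eval a} : Set M) = {t1.eval a, t2.eval a} :=
        h2.trans h1.symm
      have hr1mem : r1.eval a ∈ ({t1.eval a, t2.eval a} : Set M) :=
        hset ▸ Set.mem_insert _ _
      rcases Set.mem_insert_iff.mp hr1mem with hcase | hcase
      · have hc2 : r2.eval a = t2.eval a := by
          calc r2.eval a = r1.eval a * (r1.eval a * r2.eval a) :=
                (Steiner.lcancel _ _).symm
            _ = t1.eval a * (t1.eval a * t2.eval a) := by rw [hev', hcase]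
            _ = t2.eval a := Steiner.lcancel _ _
        exact TEquiv.congr
          (eqv r1 t1 hr1 ht1 hr1K (le_max_left _ _) hcase)
          (eqv r2 t2 hr2 ht2 hr2K (le_max_right _ _) hc2)
      · have hcase' : r1.eval a = t2.eval a := Set.mem_singleton_iff.mp hcase
        have hc2 : r2.eval a = t1.eval a := by
          calc r2.eval a = r1.eval a * (r1.eval a * r2.eval a) :=
                (Steiner.lcancel _ _).symm
            _ = t2.eval a * (t1.eval a * t2.eval a) := by rw [hev', hcase']
            _ = t2.eval a * (t2.eval a * t1.eval a) := by rw [Steiner.comm (t1.eval a)]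
            _ = t1.eval a := Steiner.lcancel _ _
        exact TEquiv.trans
          (TEquiv.congr
            (eqv r1 t2 hr1 ht2 hr1K (le_max_right _ _) hcase')
            (eqv r2 t1 hr2 ht1 hr2K (le_max_left _ _) hc2))
          (TEquiv.comm t2 t1)

open Steiner
/-- Over an independent tuple with a standard free construction, a reduced
term of rank `k` evaluates into `S k ∖ S_{<k}`, and any reduced term with the
same value is equivalent to it. -/
theorem stmt14 {M : Type} [Steiner M] {ι : Type} (a : ι → M)
    (ha : IndepTuple a) (S : ℕ → Set M) (hS : StdFree (Set.range a) S)
    (t : Term ι) (ht : Reduced t) :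
    (t.eval a ∈ S t.rank ∧ ∀ j < t.rank, t.eval a ∉ S j) ∧
    ∀ r : Term ι, Reduced r → r.eval a = t.eval a → TEquiv r t := by
  obtain ⟨inj, -⟩ := ha
  have key := key_lemma a inj S hS
  refine ⟨(key t.rank t ht rfl).1, ?_⟩
  intro r hr hev
  have hrr := (key r.rank r hr rfl).1
  have htt := (key t.rank t ht rfl).1
  have hrank : r.rank = t.rank := by
    by_contra hne
    rcases Nat.lt_or_ge r.rank t.rank with h | h
    · exact htt.2 r.rank h (hev ▸ hrr.1)
    · have h' : t.rank < r.rank := lt_of_le_of_ne h (Ne.symm hne)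
      exact hrr.2 t.rank h' (hev.symm ▸ htt.1)
  exact (key t.rank t ht rfl).2 r hr hrank hev
end

section
/- Let ā be an independent tuple and b an element of a Steiner quasigroup, with ā independent. Then the tuple (ā, b) is independent if and only if for every reduced term t(x̄, y) in which the variable y actually occurs, t(ā, b) ∉ ⟨ā⟩. -/
open Steiner

/-! ### Auxiliary development for stmt17 -/

attribute [local instance] Classical.propDecidable

namespace StAux

variable {α : Type}

/-- Structural characterization of `TEquiv`. -/
def Eqv : Term α → Term α → Prop
  | .var x, .var y => x = y
  | .mul a b, .mul c d => (Eqv a c ∧ Eqv b d) ∨ (Eqv a d ∧ Eqv b c)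
  | _, _ => False

theorem eqv_refl : ∀ t : Term α, Eqv t t
  | .var _ => rfl
  | .mul a b => Or.inl ⟨eqv_refl a, eqv_refl b⟩

theorem eqv_symm : ∀ {t s : Term α}, Eqv t s → Eqv s t
  | .var _, .var _, h => h.symm
  | .mul _ _, .mul _ _, Or.inl ⟨h1, h2⟩ => Or.inl ⟨eqv_symm h1, eqv_symm h2⟩
  | .mul _ _, .mul _ _, Or.inr ⟨h1, h2⟩ => Or.inr ⟨eqv_symm h2, eqv_symm h1⟩

theorem eqv_trans : ∀ {t s u : Term α}, Eqv t s → Eqv s u → Eqv t u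
  | .var _, .var _, .var _, h1, h2 => h1.trans h2
  | .mul _ _, .mul _ _, .mul _ _, Or.inl ⟨h1, h2⟩, Or.inl ⟨h3, h4⟩ =>
      Or.inl ⟨eqv_trans h1 h3, eqv_trans h2 h4⟩
  | .mul _ _, .mul _ _, .mul _ _, Or.inl ⟨h1, h2⟩, Or.inr ⟨h3, h4⟩ =>
      Or.inr ⟨eqv_trans h1 h3, eqv_trans h2 h4⟩
  | .mul _ _, .mul _ _, .mul _ _, Or.inr ⟨h1, h2⟩, Or.inl ⟨h3, h4⟩ =>
      Or.inr ⟨eqv_trans h1 h4, eqv_trans h2 h3⟩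
  | .mul _ _, .mul _ _, .mul _ _, Or.inr ⟨h1, h2⟩, Or.inr ⟨h3, h4⟩ =>
      Or.inl ⟨eqv_trans h1 h4, eqv_trans h2 h3⟩

theorem eqv_of_tequiv {t s : Term α} (h : TEquiv t s) : Eqv t s := by
  induction h with
  | refl t => exact eqv_refl t
  | symm _ ih => exact eqv_symm ih
  | trans _ _ ih1 ih2 => exact eqv_trans ih1 ih2
  | comm t s => exact Or.inr ⟨eqv_refl t, eqv_refl s⟩
  | congr _ _ ih1 ih2 => exact Or.inl ⟨ih1, ih2⟩

theorem tequiv_of_eqv : ∀ {t s : Term α}, Eqv t s → TEquiv t s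
  | .var _, .var _, h => h ▸ TEquiv.refl _
  | .mul _ _, .mul _ _, Or.inl ⟨h1, h2⟩ =>
      TEquiv.congr (tequiv_of_eqv h1) (tequiv_of_eqv h2)
  | .mul a b, .mul c d, Or.inr ⟨h1, h2⟩ =>
      TEquiv.trans (TEquiv.comm a b)
        (TEquiv.congr (tequiv_of_eqv h2) (tequiv_of_eqv h1))

theorem tequiv_iff_eqv {t s : Term α} : TEquiv t s ↔ Eqv t s :=
  ⟨eqv_of_tequiv, tequiv_of_eqv⟩

theorem tequiv_var_iff {x : α} {s : Term α} :
    TEquiv (.var x) s ↔ s = .var x := by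
  constructor
  · intro h
    have := eqv_of_tequiv h
    cases s with
    | var y => simp only [Eqv] at this; exact congrArg Term.var this.symm
    | mul _ _ => exact absurd this id
  · rintro rfl; exact TEquiv.refl _

theorem tequiv_mul_iff {a b : Term α} {s : Term α} :
    TEquiv (.mul a b) s ↔
      ∃ c d, s = .mul c d ∧ ((TEquiv a c ∧ TEquiv b d) ∨ (TEquiv a d ∧ TEquiv b c)) := by
  constructor
  · intro h
    have := eqv_of_tequiv h
    cases s with
    | var y => exact absurd this id
    | mul c d =>
      refine ⟨c, d, rfl, ?_⟩
      rcases this with ⟨h1, h2⟩ | ⟨h1, h2⟩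
      · exact Or.inl ⟨tequiv_of_eqv h1, tequiv_of_eqv h2⟩
      · exact Or.inr ⟨tequiv_of_eqv h1, tequiv_of_eqv h2⟩
  · rintro ⟨c, d, rfl, ⟨h1, h2⟩ | ⟨h1, h2⟩⟩
    · exact TEquiv.congr h1 h2
    · exact (TEquiv.comm a b).trans (TEquiv.congr h2 h1)

theorem rank_eq_of_tequiv {t s : Term α} (h : TEquiv t s) : t.rank = s.rank := by
  induction h with
  | refl t => rfl
  | symm _ ih => exact ih.symm
  | trans _ _ ih1 ih2 => exact ih1.trans ih2
  | comm t s => simp [Term.rank, Nat.max_comm]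
  | congr _ _ ih1 ih2 => simp [Term.rank, ih1, ih2]

theorem occurs_iff_of_tequiv {x : α} {t s : Term α} (h : TEquiv t s) :
    Occurs x t ↔ Occurs x s := by
  induction h with
  | refl t => rfl
  | symm _ ih => exact ih.symm
  | trans _ _ ih1 ih2 => exact ih1.trans ih2
  | comm t s =>
    constructor <;> intro h
    · cases h with
      | left h => exact Occurs.right h
      | right h => exact Occurs.left h
    · cases h with
      | left h => exact Occurs.right h
      | right h => exact Occurs.left h
  | congr _ _ ih1 ih2 =>
    constructor <;> intro h
    · cases h with
      | left h => exact Occurs.left (ih1.mp h)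
      | right h => exact Occurs.right (ih2.mp h)
    · cases h with
      | left h => exact Occurs.left (ih1.mpr h)
      | right h => exact Occurs.right (ih2.mpr h)

variable {M : Type} [Steiner M]

theorem eval_eq_of_tequiv {t s : Term α} (h : TEquiv t s) (v : α → M) :
    t.eval v = s.eval v := by
  induction h with
  | refl t => rfl
  | symm _ ih => exact ih.symm
  | trans _ _ ih1 ih2 => exact ih1.trans ih2
  | comm t s => exact Steiner.comm _ _
  | congr _ _ ih1 ih2 => simp only [Term.eval, ih1, ih2]

end StAux

namespace StAux

variable {α : Type} {M : Type} [Steiner M]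

theorem subterm_trans {p s t : Term α} (h1 : Subterm p s) (h2 : Subterm s t) :
    Subterm p t := by
  induction h2 with
  | refl => exact h1
  | left _ ih => exact Subterm.left ih
  | right _ ih => exact Subterm.right ih

theorem reduced_of_subterm {s t : Term α} (ht : Reduced t) (h : Subterm s t) :
    Reduced s :=
  ⟨fun t1 t2 hs => ht.1 t1 t2 (subterm_trans hs h),
   fun t1 t2 t3 hs => ht.2.1 t1 t2 t3 (subterm_trans hs h),
   fun t1 t2 t3 hs => ht.2.2 t1 t2 t3 (subterm_trans hs h)⟩

theorem subterm_mul_inv {u t s : Term α} (h : Subterm u (.mul t s)) :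
    u = .mul t s ∨ Subterm u t ∨ Subterm u s := by
  cases h with
  | refl => exact Or.inl rfl
  | left h => exact Or.inr (Or.inl h)
  | right h => exact Or.inr (Or.inr h)

/-- No top-level reduction applies to `t·s`. -/
def NoTop (t s : Term α) : Prop :=
  ¬ TEquiv t s ∧
  (∀ t1 t2 : Term α, t = .mul t1 t2 → ¬ TEquiv t1 s ∧ ¬ TEquiv t2 s) ∧
  (∀ s1 s2 : Term α, s = .mul s1 s2 → ¬ TEquiv t s1 ∧ ¬ TEquiv t s2)

theorem reduced_mul_iff {t s : Term α} :
    Reduced (.mul t s) ↔ Reduced t ∧ Reduced s ∧ NoTop t s := by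
  constructor
  · intro h
    refine ⟨reduced_of_subterm h (Subterm.left (Subterm.refl t)),
      reduced_of_subterm h (Subterm.right (Subterm.refl s)), ?_, ?_, ?_⟩
    · exact h.1 t s (Subterm.refl _)
    · rintro t1 t2 rfl
      exact h.2.2 t1 t2 s (Subterm.refl _)
    · rintro s1 s2 rfl
      exact h.2.1 t s1 s2 (Subterm.refl _)
  · rintro ⟨ht, hs, hn1, hn2, hn3⟩
    refine ⟨?_, ?_, ?_⟩
    · intro t1 t2 hsub
      rcases subterm_mul_inv hsub with heq | h | h
      · cases heq; exact hn1
      · exact ht.1 t1 t2 h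
      · exact hs.1 t1 t2 h
    · intro t1 t2 t3 hsub
      rcases subterm_mul_inv hsub with heq | h | h
      · cases heq; exact hn3 t2 t3 rfl
      · exact ht.2.1 t1 t2 t3 h
      · exact hs.2.1 t1 t2 t3 h
    · intro t1 t2 t3 hsub
      rcases subterm_mul_inv hsub with heq | h | h
      · cases heq; exact hn2 t1 t2 rfl
      · exact ht.2.2 t1 t2 t3 h
      · exact hs.2.2 t1 t2 t3 h

theorem reduced_var (x : α) : Reduced (Term.var x : Term α) := by
  have inv : ∀ u : Term α, Subterm u (.var x) → u = .var x := by
    intro u h; cases h; rfl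
  exact ⟨fun t1 t2 h => absurd (inv _ h) (by simp),
    fun t1 t2 t3 h => absurd (inv _ h) (by simp),
    fun t1 t2 t3 h => absurd (inv _ h) (by simp)⟩

/-- Left-absorption helper: if `t = t₁·t₂` with `tᵢ ∼ s`, return the other. -/
noncomputable def auxm (t s : Term α) : Option (Term α) :=
  match t with
  | .var _ => none
  | .mul t1 t2 =>
      if TEquiv t1 s then some t2 else if TEquiv t2 s then some t1 else none

theorem auxm_some {t s r : Term α} (h : auxm t s = some r) :
    ∃ t1 t2, t = .mul t1 t2 ∧
      ((TEquiv t1 s ∧ r = t2) ∨ (¬ TEquiv t1 s ∧ TEquiv t2 s ∧ r = t1)) := by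
  cases t with
  | var x => simp [auxm] at h
  | mul t1 t2 =>
    refine ⟨t1, t2, rfl, ?_⟩
    by_cases h1 : TEquiv t1 s
    · simp [auxm, h1] at h; exact Or.inl ⟨h1, h.symm⟩
    · by_cases h2 : TEquiv t2 s
      · simp [auxm, h1, h2] at h; exact Or.inr ⟨h1, h2, h.symm⟩
      · simp [auxm, h1, h2] at h

theorem auxm_eq_none {t s : Term α}
    (h : ∀ t1 t2, t = .mul t1 t2 → ¬ TEquiv t1 s ∧ ¬ TEquiv t2 s) :
    auxm t s = none := by
  cases t with
  | var x => rfl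
  | mul t1 t2 =>
    have := h t1 t2 rfl
    simp [auxm, this.1, this.2]

theorem auxm_none {t s : Term α} (h : auxm t s = none) :
    ∀ t1 t2, t = .mul t1 t2 → ¬ TEquiv t1 s ∧ ¬ TEquiv t2 s := by
  rintro t1 t2 rfl
  by_cases h1 : TEquiv t1 s
  · simp [auxm, h1] at h
  · by_cases h2 : TEquiv t2 s
    · simp [auxm, h1, h2] at h
    · exact ⟨h1, h2⟩

theorem auxm_none_of_var {x : α} (s : Term α) : auxm (Term.var x) s = none := rfl

/-- Normal-form multiplication of (reduced) terms. -/
noncomputable def nm (t s : Term α) : Term α :=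
  if TEquiv t s then t
  else
    match auxm t s with
    | some r => r
    | none =>
      match auxm s t with
      | some r => r
      | none => .mul t s

theorem nm_of_tequiv {t s : Term α} (h : TEquiv t s) : nm t s = t := by
  simp [nm, h]

theorem nm_of_auxm {t s r : Term α} (h : ¬ TEquiv t s) (ha : auxm t s = some r) :
    nm t s = r := by
  simp [nm, h, ha]

theorem nm_of_auxm' {t s r : Term α} (h : ¬ TEquiv t s) (ha : auxm t s = none)
    (hb : auxm s t = some r) : nm t s = r := by
  simp [nm, h, ha, hb]

theorem nm_of_none {t s : Term α} (h : ¬ TEquiv t s) (ha : auxm t s = none)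
    (hb : auxm s t = none) : nm t s = .mul t s := by
  simp [nm, h, ha, hb]

/-- Key evaluation property of the normal-form multiplication. -/
theorem nm_eval (t s : Term α) (v : α → M) :
    (nm t s).eval v = t.eval v * s.eval v := by
  have key : ∀ x y : M, (x * y) * x = y := fun x y => by
    rw [Steiner.comm, Steiner.lcancel]
  by_cases h : TEquiv t s
  · rw [nm_of_tequiv h, ← eval_eq_of_tequiv h v, Steiner.idem]
  rcases ha : auxm t s with _ | r
  · rcases hb : auxm s t with _ | r
    · rw [nm_of_none h ha hb]; rfl
    · rw [nm_of_auxm' h ha hb]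
      rcases auxm_some hb with ⟨s1, s2, rfl, ⟨h1, hr⟩ | ⟨_, h2, hr⟩⟩
      · -- s = s1·s2, s1 ∼ t, result s2 : t * (s1*s2) = s2
        rw [hr, show Term.eval v t = Term.eval v s1 from eval_eq_of_tequiv h1.symm v]
        exact (Steiner.lcancel _ _).symm
      · rw [hr, show Term.eval v t = Term.eval v s2 from eval_eq_of_tequiv h2.symm v]
        show Term.eval v s1 = _
        rw [show Term.eval v (s1.mul s2) = Term.eval v s1 * Term.eval v s2 from rfl,
          Steiner.comm (Term.eval v s1) (Term.eval v s2), Steiner.lcancel]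
  · rw [nm_of_auxm h ha]
    rcases auxm_some ha with ⟨t1, t2, rfl, ⟨h1, hr⟩ | ⟨_, h2, hr⟩⟩
    · -- t = t1·t2, t1 ∼ s, result t2 : (t1*t2) * s = t2
      rw [hr, show Term.eval v s = Term.eval v t1 from eval_eq_of_tequiv h1.symm v]
      show _ = (Term.eval v t1 * Term.eval v t2) * Term.eval v t1
      rw [key]
    · rw [hr, show Term.eval v s = Term.eval v t2 from eval_eq_of_tequiv h2.symm v]
      show _ = (Term.eval v t1 * Term.eval v t2) * Term.eval v t2
      rw [Steiner.comm (Term.eval v t1) (Term.eval v t2), key]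

theorem nm_reduced {t s : Term α} (ht : Reduced t) (hs : Reduced s) :
    Reduced (nm t s) := by
  by_cases h : TEquiv t s
  · rwa [nm_of_tequiv h]
  rcases ha : auxm t s with _ | r
  · rcases hb : auxm s t with _ | r
    · rw [nm_of_none h ha hb]
      refine reduced_mul_iff.mpr ⟨ht, hs, h, ?_, ?_⟩
      · exact auxm_none ha
      · intro s1 s2 hseq
        have := auxm_none hb s1 s2 hseq
        exact ⟨fun hc => this.1 hc.symm, fun hc => this.2 hc.symm⟩
    · rw [nm_of_auxm' h ha hb]
      rcases auxm_some hb with ⟨s1, s2, rfl, ⟨_, hr⟩ | ⟨_, _, hr⟩⟩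
      · exact hr ▸ reduced_of_subterm hs (Subterm.right (Subterm.refl _))
      · exact hr ▸ reduced_of_subterm hs (Subterm.left (Subterm.refl _))
  · rw [nm_of_auxm h ha]
    rcases auxm_some ha with ⟨t1, t2, rfl, ⟨_, hr⟩ | ⟨_, _, hr⟩⟩
    · exact hr ▸ reduced_of_subterm ht (Subterm.right (Subterm.refl _))
    · exact hr ▸ reduced_of_subterm ht (Subterm.left (Subterm.refl _))

theorem nm_of_reduced_mul {t s : Term α} (h : Reduced (.mul t s)) :
    nm t s = .mul t s := by
  rcases reduced_mul_iff.mp h with ⟨ht, hs, hn1, hn2, hn3⟩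
  have ha : auxm t s = none := auxm_eq_none hn2
  have hb : auxm s t = none := auxm_eq_none (by
    intro s1 s2 hseq
    have := hn3 s1 s2 hseq
    exact ⟨fun hc => this.1 hc.symm, fun hc => this.2 hc.symm⟩)
  exact nm_of_none hn1 ha hb

end StAux

namespace StAux

variable {α : Type} {M : Type} [Steiner M]

theorem rank_lt_left (t1 t2 : Term α) : t1.rank < (Term.mul t1 t2).rank :=
  Nat.lt_succ_of_le (le_max_left _ _)

theorem rank_lt_right (t1 t2 : Term α) : t2.rank < (Term.mul t1 t2).rank :=
  Nat.lt_succ_of_le (le_max_right _ _)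

theorem not_tequiv_of_rank {t s : Term α} (h : t.rank ≠ s.rank) : ¬ TEquiv t s :=
  fun hc => h (rank_eq_of_tequiv hc)

/-- `nm` is commutative up to `TEquiv`. -/
theorem nm_comm (t s : Term α) : TEquiv (nm t s) (nm s t) := by
  by_cases h : TEquiv t s
  · rw [nm_of_tequiv h, nm_of_tequiv h.symm]; exact h
  have h' : ¬ TEquiv s t := fun hc => h hc.symm
  rcases ha : auxm t s with _ | r
  · rcases hb : auxm s t with _ | r
    · rw [nm_of_none h ha hb, nm_of_none h' hb ha]; exact TEquiv.comm t s
    · rw [nm_of_auxm' h ha hb, nm_of_auxm h' hb]; exact TEquiv.refl r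
  · -- auxm t s = some r; then auxm s t must be none by rank
    have hb : auxm s t = none := by
      rcases hc : auxm s t with _ | r'
      · rfl
      · exfalso
        rcases auxm_some ha with ⟨t1, t2, ht, ⟨h1, _⟩ | ⟨_, h1, _⟩⟩ <;>
        rcases auxm_some hc with ⟨s1, s2, hs, ⟨h2, _⟩ | ⟨_, h2, _⟩⟩ <;>
        [skip; skip; skip; skip] <;>
        · have e1 := rank_eq_of_tequiv h1
          have e2 := rank_eq_of_tequiv h2
          subst ht; subst hs
          first
          | (have := rank_lt_left t1 t2; have := rank_lt_left s1 s2; omega)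
          | (have := rank_lt_left t1 t2; have := rank_lt_right s1 s2; omega)
          | (have := rank_lt_right t1 t2; have := rank_lt_left s1 s2; omega)
          | (have := rank_lt_right t1 t2; have := rank_lt_right s1 s2; omega)
    rw [nm_of_auxm h ha, nm_of_auxm' h' hb ha]; exact TEquiv.refl r

/-- `nm` satisfies the left-cancellation law up to `TEquiv`, on reduced terms. -/
theorem nm_lcancel {t s : Term α} (ht : Reduced t) (hs : Reduced s) :
    TEquiv (nm t (nm t s)) s := by
  by_cases h : TEquiv t s
  · rw [nm_of_tequiv h, nm_of_tequiv (TEquiv.refl t)]; exact h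
  rcases ha : auxm t s with _ | r
  · rcases hb : auxm s t with _ | r
    · -- nm t s = t·s ; then nm t (t·s) = s via auxm (t·s) t
      rw [nm_of_none h ha hb]
      have h1 : ¬ TEquiv t (.mul t s) :=
        not_tequiv_of_rank (by have := rank_lt_left t s; omega)
      have h2 : auxm t (.mul t s) = none := by
        apply auxm_eq_none
        rintro t1 t2 rfl
        constructor <;> apply not_tequiv_of_rank <;>
          [have := rank_lt_left t1 t2; have := rank_lt_right t1 t2] <;>
          have := rank_lt_left (Term.mul t1 t2) s <;> simp [Term.rank] at * <;> omega
      have h3 : auxm (.mul t s) t = some s := by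
        simp [auxm, TEquiv.refl t]
      rw [nm_of_auxm' h1 h2 h3]; exact TEquiv.refl s
    · -- s = s1·s2 with sᵢ ∼ t
      rw [nm_of_auxm' h ha hb]
      rcases auxm_some hb with ⟨s1, s2, hseq, ⟨h1, hr⟩ | ⟨hn1, h2, hr⟩⟩
      · -- s1 ∼ t, nm t s = s2; show nm t s2 ∼ s
        subst hseq; subst hr
        have hred := reduced_mul_iff.mp hs
        have hns : ¬ TEquiv t r := fun hc =>
          hred.2.2.1 (h1.trans hc)
        have h2 : auxm t r = none := by
          apply auxm_eq_none
          intro t1 t2 hteq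
          -- t = t1·t2 and s1 ∼ t, so s1 = p·q with {p,q} ∼ {t1,t2};
          -- reducedness of (p·q)·s2 forbids tᵢ ∼ s2
          rcases tequiv_mul_iff.mp (hteq ▸ h1.symm) with ⟨p, q, hpq, hcc⟩
          have hforb := (reduced_mul_iff.mp hs).2.2.2.1 p q hpq
          rcases hcc with ⟨c1, c2⟩ | ⟨c1, c2⟩
          · exact ⟨fun hc => hforb.1 (c1.symm.trans hc),
              fun hc => hforb.2 (c2.symm.trans hc)⟩
          · exact ⟨fun hc => hforb.2 (c1.symm.trans hc),
              fun hc => hforb.1 (c2.symm.trans hc)⟩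
        have h3 : auxm r t = none := by
          apply auxm_eq_none
          rintro v1 v2 rfl
          have hforb := (reduced_mul_iff.mp hs).2.2.2.2 v1 v2 rfl
          exact ⟨fun hc => hforb.1 (h1.trans hc.symm),
            fun hc => hforb.2 (h1.trans hc.symm)⟩
        rw [nm_of_none hns h2 h3]
        exact TEquiv.congr h1.symm (TEquiv.refl r)
      · -- s2 ∼ t, nm t s = s1; show nm t s1 ∼ s
        subst hseq; subst hr
        have hred := reduced_mul_iff.mp hs
        have hns : ¬ TEquiv t r := fun hc => hn1 hc.symm
        have h2' : auxm t r = none := by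
          apply auxm_eq_none
          intro t1 t2 hteq
          rcases tequiv_mul_iff.mp (hteq ▸ h2.symm) with ⟨p, q, hpq, hcc⟩
          have hforb := (reduced_mul_iff.mp hs).2.2.2.2 p q hpq
          rcases hcc with ⟨c1, c2⟩ | ⟨c1, c2⟩
          · exact ⟨fun hc => hforb.1 (hc.symm.trans c1),
              fun hc => hforb.2 (hc.symm.trans c2)⟩
          · exact ⟨fun hc => hforb.2 (hc.symm.trans c1),
              fun hc => hforb.1 (hc.symm.trans c2)⟩
        have h3' : auxm r t = none := by
          apply auxm_eq_none
          rintro v1 v2 rfl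
          have hforb := (reduced_mul_iff.mp hs).2.2.2.1 v1 v2 rfl
          exact ⟨fun hc => hforb.1 (hc.trans h2.symm),
            fun hc => hforb.2 (hc.trans h2.symm)⟩
        rw [nm_of_none hns h2' h3']
        exact (TEquiv.comm t r).trans (TEquiv.congr (TEquiv.refl r) h2.symm)
  · -- t = t1·t2 with tᵢ ∼ s
    rw [nm_of_auxm h ha]
    rcases auxm_some ha with ⟨t1, t2, hteq, ⟨h1, hr⟩ | ⟨hn1, h2, hr⟩⟩
    · -- t1 ∼ s, nm t s = t2; show nm t t2 ∼ s
      subst hteq; subst hr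
      have hred := reduced_mul_iff.mp ht
      have hns : ¬ TEquiv (Term.mul t1 r) r :=
        not_tequiv_of_rank (by have := rank_lt_right t1 r; omega)
      have h2 : auxm (Term.mul t1 r) r = some t1 := by
        have : ¬ TEquiv t1 r := hred.2.2.1
        simp [auxm, this, TEquiv.refl r]
      rw [nm_of_auxm hns h2]; exact h1
    · -- t2 ∼ s, nm t s = t1; show nm t t1 ∼ s
      subst hteq; subst hr
      have hns : ¬ TEquiv (Term.mul r t2) r :=
        not_tequiv_of_rank (by have := rank_lt_left r t2; omega)
      have h2' : auxm (Term.mul r t2) r = some t2 := by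
        simp [auxm, TEquiv.refl r]
      rw [nm_of_auxm hns h2']; exact h2

end StAux

namespace StAux

variable {α : Type} {M : Type} [Steiner M]

theorem auxm_congr_right {t s s' : Term α} (h2 : TEquiv s s') :
    auxm t s = auxm t s' := by
  cases t with
  | var x => rfl
  | mul t1 t2 =>
    show (if TEquiv t1 s then some t2 else if TEquiv t2 s then some t1 else none) =
      (if TEquiv t1 s' then some t2 else if TEquiv t2 s' then some t1 else none)
    have e1 : TEquiv t1 s ↔ TEquiv t1 s' := ⟨fun h => h.trans h2, fun h => h.trans h2.symm⟩
    have e2 : TEquiv t2 s ↔ TEquiv t2 s' := ⟨fun h => h.trans h2, fun h => h.trans h2.symm⟩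
    by_cases c1 : TEquiv t1 s
    · rw [if_pos c1, if_pos (e1.mp c1)]
    · rw [if_neg c1, if_neg (fun h => c1 (e1.mpr h))]
      by_cases c2 : TEquiv t2 s
      · rw [if_pos c2, if_pos (e2.mp c2)]
      · rw [if_neg c2, if_neg (fun h => c2 (e2.mpr h))]

theorem nm_congr_right {t s s' : Term α} (hs : Reduced s) (hs' : Reduced s')
    (h2 : TEquiv s s') : TEquiv (nm t s) (nm t s') := by
  by_cases h : TEquiv t s
  · rw [nm_of_tequiv h, nm_of_tequiv (h.trans h2)]; exact TEquiv.refl t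
  have h' : ¬ TEquiv t s' := fun hc => h (hc.trans h2.symm)
  have hac := auxm_congr_right (t := t) h2
  rcases ha : auxm t s with _ | r
  · rw [ha] at hac
    -- now compare auxm s t and auxm s' t
    cases s with
    | var x =>
      -- s' must be the same var
      have hx : s' = Term.var x := tequiv_var_iff.mp h2
      subst hx
      rw [nm_of_none h ha (auxm_none_of_var t)]
      exact TEquiv.refl _
    | mul s1 s2 =>
      rcases tequiv_mul_iff.mp h2 with ⟨p, q, hpq, hcc⟩
      subst hpq
      have hb : auxm (Term.mul s1 s2) t =
          (if TEquiv s1 t then some s2 else if TEquiv s2 t then some s1 else none) := rfl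
      have hb' : auxm (Term.mul p q) t =
          (if TEquiv p t then some q else if TEquiv q t then some p else none) := rfl
      rcases hcc with ⟨c1, c2⟩ | ⟨c1, c2⟩
      · -- straight
        by_cases d1 : TEquiv s1 t
        · have d1' : TEquiv p t := c1.symm.trans d1
          rw [nm_of_auxm' h ha (by rw [hb, if_pos d1]),
            nm_of_auxm' h' hac.symm (by rw [hb', if_pos d1'])]
          exact c2
        · have d1' : ¬ TEquiv p t := fun hc => d1 (c1.trans hc)
          by_cases d2 : TEquiv s2 t
          · have d2' : TEquiv q t := c2.symm.trans d2
            rw [nm_of_auxm' h ha (by rw [hb, if_neg d1, if_pos d2]),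
              nm_of_auxm' h' hac.symm (by rw [hb', if_neg d1', if_pos d2'])]
            exact c1
          · have d2' : ¬ TEquiv q t := fun hc => d2 (c2.trans hc)
            rw [nm_of_none h ha (by rw [hb, if_neg d1, if_neg d2]),
              nm_of_none h' hac.symm (by rw [hb', if_neg d1', if_neg d2'])]
            exact TEquiv.congr (TEquiv.refl t) h2
      · -- crossed : s1 ∼ q, s2 ∼ p
        by_cases d1 : TEquiv s1 t
        · -- auxm s t = some s2 ; on the other side TEquiv q t holds
          have dq : TEquiv q t := c1.symm.trans d1
          have dp : ¬ TEquiv p t := by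
            intro hc
            -- then p ∼ t ∼ s1 ∼ q, contradicting Reduced (mul p q)
            exact (reduced_mul_iff.mp hs').2.2.1 (hc.trans dq.symm)
          rw [nm_of_auxm' h ha (by rw [hb, if_pos d1]),
            nm_of_auxm' h' hac.symm (by rw [hb', if_neg dp, if_pos dq])]
          exact c2.symm.symm
        · have dq' : ¬ TEquiv q t := fun hc => d1 (c1.trans hc)
          by_cases d2 : TEquiv s2 t
          · have dp : TEquiv p t := c2.symm.trans d2
            rw [nm_of_auxm' h ha (by rw [hb, if_neg d1, if_pos d2]),
              nm_of_auxm' h' hac.symm (by rw [hb', if_pos dp])]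
            exact c1
          · have dp' : ¬ TEquiv p t := fun hc => d2 (c2.trans hc)
            rw [nm_of_none h ha (by rw [hb, if_neg d1, if_neg d2]),
              nm_of_none h' hac.symm (by rw [hb', if_neg dp', if_neg dq'])]
            exact TEquiv.congr (TEquiv.refl t) h2
  · rw [ha] at hac
    rw [nm_of_auxm h ha, nm_of_auxm h' hac.symm]
    exact TEquiv.refl r

theorem nm_congr {t t' s s' : Term α} (ht : Reduced t) (ht' : Reduced t')
    (hs : Reduced s) (hs' : Reduced s')
    (h1 : TEquiv t t') (h2 : TEquiv s s') : TEquiv (nm t s) (nm t' s') :=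
  ((nm_congr_right hs hs' h2).trans (nm_comm t s')).trans
    ((nm_congr_right ht ht' h1).trans (nm_comm s' t'))

/-- The carrier of the free Steiner quasigroup on `α`: reduced terms mod `TEquiv`. -/
def RSetoid (α : Type) : Setoid {t : Term α // Reduced t} where
  r t s := TEquiv t.1 s.1
  iseqv := ⟨fun t => TEquiv.refl t.1, TEquiv.symm, TEquiv.trans⟩

def FreeSteiner (α : Type) : Type := Quotient (RSetoid α)

def FreeSteiner.mk {α : Type} (t : Term α) (h : Reduced t) : FreeSteiner α :=
  Quotient.mk (RSetoid α) ⟨t, h⟩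

theorem FreeSteiner.mk_eq {α : Type} {t s : Term α} {h1 : Reduced t} {h2 : Reduced s} :
    FreeSteiner.mk t h1 = FreeSteiner.mk s h2 ↔ TEquiv t s :=
  ⟨fun h => Quotient.exact h, fun h => Quotient.sound h⟩

noncomputable instance : Steiner (FreeSteiner α) where
  mul x y := Quotient.liftOn₂ x y
    (fun t s => FreeSteiner.mk (nm t.1 s.1) (nm_reduced t.2 s.2))
    (fun t s t' s' h1 h2 =>
      Quotient.sound (nm_congr t.2 t'.2 s.2 s'.2 h1 h2))
  comm x y := by
    induction x using Quotient.ind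
    induction y using Quotient.ind
    exact Quotient.sound (nm_comm _ _)
  idem x := by
    induction x using Quotient.ind
    next t =>
      exact Quotient.sound (show TEquiv (nm t.1 t.1) t.1 by
        rw [nm_of_tequiv (TEquiv.refl _)]; exact TEquiv.refl _)
  lcancel x y := by
    induction x using Quotient.ind
    induction y using Quotient.ind
    next t s => exact Quotient.sound (nm_lcancel t.2 s.2)

theorem FreeSteiner.mk_mul {t s : Term α} (h1 : Reduced t) (h2 : Reduced s) :
    FreeSteiner.mk t h1 * FreeSteiner.mk s h2 =
      FreeSteiner.mk (nm t s) (nm_reduced h1 h2) := rfl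

end StAux

namespace StAux

variable {α β : Type} {M : Type} [Steiner M]

/-- Full reduction of a term. -/
noncomputable def red : Term α → Term α
  | .var x => .var x
  | .mul t s => nm (red t) (red s)

theorem red_reduced : ∀ t : Term α, Reduced (red t)
  | .var x => reduced_var x
  | .mul t s => nm_reduced (red_reduced t) (red_reduced s)

theorem red_eval (v : α → M) : ∀ t : Term α, (red t).eval v = t.eval v
  | .var x => rfl
  | .mul t s => by
    show (nm (red t) (red s)).eval v = _
    rw [nm_eval, red_eval v t, red_eval v s]; rfl

theorem red_of_reduced : ∀ {t : Term α}, Reduced t → red t = t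
  | .var x, _ => rfl
  | .mul t s, h => by
    show nm (red t) (red s) = _
    rw [red_of_reduced (reduced_of_subterm h (Subterm.left (Subterm.refl _))),
      red_of_reduced (reduced_of_subterm h (Subterm.right (Subterm.refl _))),
      nm_of_reduced_mul h]

theorem occurs_subterm {x : α} {u t : Term α} (h : Subterm u t) (ho : Occurs x u) :
    Occurs x t := by
  induction h with
  | refl => exact ho
  | left _ ih => exact Occurs.left ih
  | right _ ih => exact Occurs.right ih

theorem occurs_nm {x : α} {t s : Term α} (h : Occurs x (nm t s)) :
    Occurs x t ∨ Occurs x s := by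
  by_cases he : TEquiv t s
  · rw [nm_of_tequiv he] at h; exact Or.inl h
  rcases ha : auxm t s with _ | r
  · rcases hb : auxm s t with _ | r
    · rw [nm_of_none he ha hb] at h
      cases h with
      | left h => exact Or.inl h
      | right h => exact Or.inr h
    · rw [nm_of_auxm' he ha hb] at h
      rcases auxm_some hb with ⟨s1, s2, hseq, ⟨_, hr⟩ | ⟨_, _, hr⟩⟩ <;> subst hseq
      · exact Or.inr (occurs_subterm (Subterm.right (Subterm.refl _)) (hr ▸ h))
      · exact Or.inr (occurs_subterm (Subterm.left (Subterm.refl _)) (hr ▸ h))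
  · rw [nm_of_auxm he ha] at h
    rcases auxm_some ha with ⟨t1, t2, hteq, ⟨_, hr⟩ | ⟨_, _, hr⟩⟩ <;> subst hteq
    · exact Or.inl (occurs_subterm (Subterm.right (Subterm.refl _)) (hr ▸ h))
    · exact Or.inl (occurs_subterm (Subterm.left (Subterm.refl _)) (hr ▸ h))

theorem occurs_red {x : α} : ∀ {t : Term α}, Occurs x (red t) → Occurs x t
  | .var y, h => h
  | .mul t s, h => by
    rcases occurs_nm h with h | h
    · exact Occurs.left (occurs_red h)
    · exact Occurs.right (occurs_red h)

theorem exists_occurs : ∀ t : Term α, ∃ x, Occurs x t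
  | .var x => ⟨x, Occurs.var⟩
  | .mul t s => (exists_occurs t).imp fun x h => Occurs.left h

theorem reduced_single_var {x : α} :
    ∀ {t : Term α}, Reduced t → (∀ y, Occurs y t → y = x) → t = .var x
  | .var y, _, h => by rw [h y Occurs.var]
  | .mul t s, hr, h => by
    exfalso
    have ht := reduced_single_var
      (reduced_of_subterm hr (Subterm.left (Subterm.refl _)))
      (fun y hy => h y (Occurs.left hy))
    have hs := reduced_single_var
      (reduced_of_subterm hr (Subterm.right (Subterm.refl _)))
      (fun y hy => h y (Occurs.right hy))
    exact hr.1 t s (Subterm.refl _) (by rw [ht, hs]; exact TEquiv.refl _)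

/-! ### Renamings -/

def tmap (f : α → β) : Term α → Term β
  | .var x => .var (f x)
  | .mul t s => .mul (tmap f t) (tmap f s)

theorem tmap_eval (f : α → β) (v : β → M) :
    ∀ t : Term α, (tmap f t).eval v = t.eval (v ∘ f)
  | .var x => rfl
  | .mul t s => by
    show (tmap f t).eval v * (tmap f s).eval v = _
    rw [tmap_eval f v t, tmap_eval f v s]; rfl

theorem occurs_tmap {f : α → β} {y : β} :
    ∀ {t : Term α}, Occurs y (tmap f t) → ∃ x, Occurs x t ∧ f x = y
  | .var x, h => by cases h; exact ⟨x, Occurs.var, rfl⟩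
  | .mul t s, h => by
    cases h with
    | left h => exact (occurs_tmap h).imp fun x ⟨h1, h2⟩ => ⟨Occurs.left h1, h2⟩
    | right h => exact (occurs_tmap h).imp fun x ⟨h1, h2⟩ => ⟨Occurs.right h1, h2⟩

theorem tequiv_tmap (f : α → β) {t s : Term α} (h : TEquiv t s) :
    TEquiv (tmap f t) (tmap f s) := by
  induction h with
  | refl t => exact TEquiv.refl _
  | symm _ ih => exact ih.symm
  | trans _ _ ih1 ih2 => exact ih1.trans ih2
  | comm t s => exact TEquiv.comm _ _
  | congr _ _ ih1 ih2 => exact TEquiv.congr ih1 ih2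

theorem tequiv_of_tmap {f : α → β} (hf : Function.Injective f) :
    ∀ {t s : Term α}, TEquiv (tmap f t) (tmap f s) → TEquiv t s := by
  intro t s h
  suffices hh : ∀ t s : Term α, Eqv (tmap f t) (tmap f s) → Eqv t s from
    tequiv_of_eqv (hh t s (eqv_of_tequiv h))
  intro t
  induction t with
  | var x =>
    intro s h
    cases s with
    | var y => exact hf (h : f x = f y)
    | mul _ _ => exact absurd h id
  | mul t1 t2 ih1 ih2 =>
    intro s h
    cases s with
    | var y => exact absurd h id
    | mul s1 s2 =>
      rcases h with ⟨h1, h2⟩ | ⟨h1, h2⟩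
      · exact Or.inl ⟨ih1 s1 h1, ih2 s2 h2⟩
      · exact Or.inr ⟨ih1 s2 h1, ih2 s1 h2⟩

theorem subterm_tmap (f : α → β) {u t : Term α} (h : Subterm u t) :
    Subterm (tmap f u) (tmap f t) := by
  induction h with
  | refl => exact Subterm.refl _
  | left _ ih => exact Subterm.left ih
  | right _ ih => exact Subterm.right ih

theorem reduced_of_tmap {f : α → β} {t : Term α} (h : Reduced (tmap f t)) :
    Reduced t := by
  refine ⟨?_, ?_, ?_⟩
  · intro t1 t2 hsub hc
    exact h.1 (tmap f t1) (tmap f t2) (subterm_tmap f hsub) (tequiv_tmap f hc)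
  · intro t1 t2 t3 hsub
    have := h.2.1 (tmap f t1) (tmap f t2) (tmap f t3) (subterm_tmap f hsub)
    exact ⟨fun hc => this.1 (tequiv_tmap f hc), fun hc => this.2 (tequiv_tmap f hc)⟩
  · intro t1 t2 t3 hsub
    have := h.2.2 (tmap f t1) (tmap f t2) (tmap f t3) (subterm_tmap f hsub)
    exact ⟨fun hc => this.1 (tequiv_tmap f hc), fun hc => this.2 (tequiv_tmap f hc)⟩

theorem exists_strip {ι : Type} :
    ∀ {t : Term (Option ι)}, ¬ Occurs none t → ∃ u : Term ι, tmap some u = t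
  | .var none, h => absurd Occurs.var h
  | .var (some i), _ => ⟨.var i, rfl⟩
  | .mul t s, h => by
    obtain ⟨u1, hu1⟩ := exists_strip (fun hc => h (Occurs.left hc))
    obtain ⟨u2, hu2⟩ := exists_strip (fun hc => h (Occurs.right hc))
    exact ⟨.mul u1 u2, by rw [tmap, hu1, hu2]⟩

/-! ### Unwinding a term at a variable occurrence -/

noncomputable def unwind (x : α) : Term α → Term α → Term α
  | .var _, z => z
  | .mul t1 t2, z =>
    if Occurs x t1 then unwind x t1 (.mul z t2) else unwind x t2 (.mul z t1)

theorem unwind_eval {x : α} :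
    ∀ {t : Term α} (z : Term α) (v : α → M), Occurs x t →
      t.eval v = z.eval v → (unwind x t z).eval v = v x
  | .var y, z, v, h, hz => by
    cases h
    exact hz.symm
  | .mul t1 t2, z, v, h, hz => by
    have key : ∀ p q : M, (p * q) * q = p := fun p q => by
      rw [Steiner.comm p q, Steiner.comm (q * p) q]; exact Steiner.lcancel q p
    by_cases h1 : Occurs x t1
    · rw [unwind, if_pos h1]
      refine unwind_eval _ v h1 ?_
      show _ = z.eval v * t2.eval v
      rw [← hz]
      exact (key _ _).symm
    · rw [unwind, if_neg h1]
      have h2 : Occurs x t2 := by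
        cases h with
        | left h => exact absurd h h1
        | right h => exact h
      refine unwind_eval _ v h2 ?_
      show _ = z.eval v * t1.eval v
      rw [← hz]
      show _ = (t1.eval v * t2.eval v) * t1.eval v
      rw [Steiner.comm (t1.eval v) (t2.eval v), key]

theorem unwind_cancel {x : α} :
    ∀ {t : Term α} (z z' : Term α) (v : α → M),
      (unwind x t z).eval v = (unwind x t z').eval v → z.eval v = z'.eval v
  | .var y, z, z', v, h => h
  | .mul t1 t2, z, z', v, h => by
    have key : ∀ p q : M, (p * q) * q = p := fun p q => by
      rw [Steiner.comm p q, Steiner.comm (q * p) q]; exact Steiner.lcancel q p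
    by_cases h1 : Occurs x t1
    · simp only [unwind, if_pos h1] at h
      have := unwind_cancel (.mul z t2) (.mul z' t2) v h
      have : z.eval v * t2.eval v = z'.eval v * t2.eval v := this
      calc z.eval v = (z.eval v * t2.eval v) * t2.eval v := (key _ _).symm
        _ = (z'.eval v * t2.eval v) * t2.eval v := by rw [this]
        _ = z'.eval v := key _ _
    · simp only [unwind, if_neg h1] at h
      have := unwind_cancel (.mul z t1) (.mul z' t1) v h
      have : z.eval v * t1.eval v = z'.eval v * t1.eval v := this
      calc z.eval v = (z.eval v * t1.eval v) * t1.eval v := (key _ _).symm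
        _ = (z'.eval v * t1.eval v) * t1.eval v := by rw [this]
        _ = z'.eval v := key _ _

/-! ### Terms and closure -/

theorem exists_term_of_mem_closure {ι : Type} {e : ι → M} {x : M}
    (h : x ∈ closure (Set.range e)) : ∃ t : Term ι, t.eval e = x := by
  induction h with
  | base hx => exact ⟨.var hx.choose, hx.choose_spec⟩
  | mul _ _ ih1 ih2 =>
    obtain ⟨t1, h1⟩ := ih1
    obtain ⟨t2, h2⟩ := ih2
    exact ⟨.mul t1 t2, by rw [show Term.eval _ (Term.mul t1 t2) =
      Term.eval _ t1 * Term.eval _ t2 from rfl, h1, h2]⟩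

/-- Evaluation of reduced terms in the free model gives the class itself. -/
theorem eval_free (t : Term α) :
    t.eval (fun x : α => FreeSteiner.mk (Term.var x) (reduced_var x)) =
      FreeSteiner.mk (red t) (red_reduced t) := by
  induction t with
  | var x => rfl
  | mul t s iht ihs =>
    show _ * _ = _
    rw [iht, ihs, FreeSteiner.mk_mul]
    rfl

/-- Homomorphisms out of a generated subquasigroup, evaluated on terms. -/
theorem hom_eval {ι : Type} {N : Type} [Steiner N] (e : ι → M)
    (g : closure (Set.range e) →ₙ* N) (v : ι → N)
    (hg : ∀ i, g ⟨e i, mem_closure.base (Set.mem_range_self i)⟩ = v i) :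
    ∀ t : Term ι, g ⟨t.eval e, eval_mem_closure e (fun i => Set.mem_range_self i) t⟩ = t.eval v := by
  intro t
  induction t with
  | var i => exact hg i
  | mul t s iht ihs =>
    have : (⟨(Term.mul t s).eval e, eval_mem_closure e (fun i => Set.mem_range_self i) _⟩ :
        closure (Set.range e)) =
        (⟨t.eval e, eval_mem_closure e (fun i => Set.mem_range_self i) t⟩ *
         ⟨s.eval e, eval_mem_closure e (fun i => Set.mem_range_self i) s⟩ :
        closure (Set.range e)) := Subtype.ext rfl
    rw [this, map_mul, iht, ihs]
    rfl

end StAux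

namespace StAux

section Main

variable {M : Type} [Steiner M] {ι : Type} (a : ι → M) (b : M)

theorem yfree_eval_mem {t : Term (Option ι)} (hot : ¬ Occurs none t) :
    t.eval (fun o : Option ι => o.elim b a) ∈ closure (Set.range a) := by
  obtain ⟨u, hu⟩ := exists_strip hot
  rw [← hu, tmap_eval]
  exact eval_mem_closure _ (fun i => Set.mem_range_self i) u

theorem yfree_inj (ha : IndepTuple a) {t s : Term (Option ι)}
    (ht : Reduced t) (hs : Reduced s)
    (hot : ¬ Occurs none t) (hos : ¬ Occurs none s)
    (heq : t.eval (fun o : Option ι => o.elim b a) =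
      s.eval (fun o : Option ι => o.elim b a)) : TEquiv t s := by
  obtain ⟨u, hu⟩ := exists_strip hot
  obtain ⟨w, hw⟩ := exists_strip hos
  obtain ⟨g, hg⟩ := ha.2 (FreeSteiner ι)
    (fun p => FreeSteiner.mk (.var p.2.choose) (reduced_var _))
  have hg' : ∀ i, g ⟨a i, mem_closure.base (Set.mem_range_self i)⟩ =
      FreeSteiner.mk (.var i) (reduced_var i) := by
    intro i
    have h1 := hg ⟨a i, Set.mem_range_self i⟩
    have h2 : (Set.mem_range_self (f := a) i).choose = i :=
      ha.1 (Set.mem_range_self (f := a) i).choose_spec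
    rw [h1]
    exact congrArg (fun j => FreeSteiner.mk (Term.var j) (reduced_var j)) h2
  have key : ∀ (x : Term ι) (hx : Reduced x),
      g ⟨x.eval a, eval_mem_closure a (fun i => Set.mem_range_self i) x⟩ =
        FreeSteiner.mk x hx := by
    intro x hx
    rw [hom_eval a g _ hg' x, eval_free x]
    exact congrArg (fun p : {t : Term ι // Reduced t} => Quotient.mk (RSetoid ι) p)
      (Subtype.ext (red_of_reduced hx))
  have hur : Reduced u := reduced_of_tmap (f := some) (hu ▸ ht)
  have hwr : Reduced w := reduced_of_tmap (f := some) (hw ▸ hs)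
  have heval : u.eval a = w.eval a := by
    have h1 : u.eval a = t.eval (fun o : Option ι => o.elim b a) := by
      rw [← hu, tmap_eval]; rfl
    have h2 : w.eval a = s.eval (fun o : Option ι => o.elim b a) := by
      rw [← hw, tmap_eval]; rfl
    rw [h1, h2, heq]
  have harg : (⟨u.eval a, eval_mem_closure a (fun i => Set.mem_range_self i) u⟩ :
      closure (Set.range a)) =
      ⟨w.eval a, eval_mem_closure a (fun i => Set.mem_range_self i) w⟩ :=
    Subtype.ext heval
  have := (key u hur).symm.trans ((congrArg g harg).trans (key w hwr))
  have huw : TEquiv u w := FreeSteiner.mk_eq.mp this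
  rw [← hu, ← hw]
  exact tequiv_tmap some huw

theorem star (ha : IndepTuple a)
    (C : ∀ t : Term (Option ι), Reduced t → Occurs none t →
      t.eval (fun o : Option ι => o.elim b a) ∉ closure (Set.range a)) :
    ∀ t s : Term (Option ι), Reduced t → Reduced s →
      t.eval (fun o : Option ι => o.elim b a) =
        s.eval (fun o : Option ι => o.elim b a) → TEquiv t s := by
  -- the asymmetric main case : both contain `none`, `t` contains `some i`
  have case3 : ∀ t s : Term (Option ι), Reduced t → Reduced s →
      t.eval (fun o : Option ι => o.elim b a) =
        s.eval (fun o : Option ι => o.elim b a) →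
      Occurs none s → (∃ i : ι, Occurs (some i) t) → TEquiv t s := by
    intro t s ht hs heq hos ⟨i, hi⟩
    have hV : (unwind (some i) t s).eval (fun o : Option ι => o.elim b a) = a i :=
      unwind_eval s _ hi heq
    by_cases hor : Occurs none (red (unwind (some i) t s))
    · exfalso
      refine C _ (red_reduced _) hor ?_
      rw [red_eval, hV]
      exact mem_closure.base (Set.mem_range_self i)
    · have hri : TEquiv (red (unwind (some i) t s)) (.var (some i)) := by
        refine yfree_inj a b ha (red_reduced _) (reduced_var _) hor
          (fun hc => by cases hc) ?_
        rw [red_eval, hV]; rfl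
      have hall : ∀ (N : Type) [Steiner N] (v : Option ι → N),
          Term.eval v s = Term.eval v t := by
        intro N _ v
        have h1 : (unwind (some i) t s).eval v = v (some i) := by
          rw [← red_eval v (unwind (some i) t s), eval_eq_of_tequiv hri v]
          rfl
        have h2 : (unwind (some i) t t).eval v = v (some i) :=
          unwind_eval t v hi rfl
        exact unwind_cancel s t v (h1.trans h2.symm)
      have hfree := hall (FreeSteiner (Option ι))
        (fun x : Option ι => FreeSteiner.mk (Term.var x) (reduced_var x))
      rw [eval_free, eval_free] at hfree
      have h3 := FreeSteiner.mk_eq.mp hfree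
      rw [red_of_reduced hs, red_of_reduced ht] at h3
      exact h3.symm
  intro t s ht hs heq
  by_cases hot : Occurs none t
  · by_cases hos : Occurs none s
    · by_cases hti : ∃ i : ι, Occurs (some i) t
      · exact case3 t s ht hs heq hos hti
      · by_cases hsi : ∃ i : ι, Occurs (some i) s
        · exact (case3 s t hs ht heq.symm hot hsi).symm
        · have h1 : t = .var none := reduced_single_var ht (by
            intro y hy
            cases y with
            | none => rfl
            | some i => exact absurd ⟨i, hy⟩ hti)
          have h2 : s = .var none := reduced_single_var hs (by
            intro y hy
            cases y with
            | none => rfl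
            | some i => exact absurd ⟨i, hy⟩ hsi)
          rw [h1, h2]; exact TEquiv.refl _
    · exact absurd (heq ▸ yfree_eval_mem a b hos) (C t ht hot)
  · by_cases hos : Occurs none s
    · exact absurd (heq.symm ▸ yfree_eval_mem a b hot) (C s hs hos)
    · exact yfree_inj a b ha ht hs hot hos heq

end Main

end StAux

/-- The extended tuple. -/
private def eTup {M : Type} {ι : Type} (a : ι → M) (b : M) : Option ι → M :=
  fun o : Option ι => o.elim b a

/-- For an independent tuple `a`, the extended tuple `(a, b)` is independent
iff no reduced term containing `y` maps `(a, b)` into `⟨a⟩`. -/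
theorem stmt17 {M : Type} [Steiner M] {ι : Type} (a : ι → M) (b : M)
    (ha : IndepTuple a) :
    IndepTuple (fun o : Option ι => o.elim b a) ↔
      ∀ t : Term (Option ι), Reduced t → Occurs none t →
        t.eval (fun o : Option ι => o.elim b a) ∉ closure (Set.range a) := by
  classical
  show IndepTuple (eTup a b) ↔
    ∀ t : Term (Option ι), Reduced t → Occurs none t →
      t.eval (eTup a b) ∉ closure (Set.range a)
  constructor
  · -- independence of the extended tuple implies the term condition
    intro h t ht hot hmem
    obtain ⟨u, hu⟩ := StAux.exists_term_of_mem_closure hmem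
    obtain ⟨g, hg⟩ := h.2 (StAux.FreeSteiner (Option ι))
      (fun p => StAux.FreeSteiner.mk (.var p.2.choose) (StAux.reduced_var _))
    have hg' : ∀ o : Option ι,
        g ⟨eTup a b o, mem_closure.base (Set.mem_range_self o)⟩ =
        StAux.FreeSteiner.mk (.var o) (StAux.reduced_var o) := by
      intro o
      have h1 := hg ⟨eTup a b o, Set.mem_range_self o⟩
      have h2 : (Set.mem_range_self (f := eTup a b) o).choose = o :=
        h.1 (Set.mem_range_self (f := eTup a b) o).choose_spec
      rw [h1]
      exact congrArg
        (fun j => StAux.FreeSteiner.mk (Term.var j) (StAux.reduced_var j)) h2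
    have key : ∀ x : Term (Option ι),
        g ⟨x.eval (eTup a b),
            eval_mem_closure (eTup a b) (fun o => Set.mem_range_self o) x⟩ =
          StAux.FreeSteiner.mk (StAux.red x) (StAux.red_reduced x) := by
      intro x
      rw [StAux.hom_eval (eTup a b) g _ hg' x, StAux.eval_free x]
    have heval : (StAux.tmap some u).eval (eTup a b) = t.eval (eTup a b) := by
      rw [StAux.tmap_eval]
      exact hu
    have harg : (⟨t.eval (eTup a b),
        eval_mem_closure (eTup a b) (fun o => Set.mem_range_self o) t⟩ :
        closure (Set.range (eTup a b))) =
        ⟨(StAux.tmap some u).eval (eTup a b),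
          eval_mem_closure (eTup a b) (fun o => Set.mem_range_self o) _⟩ :=
      Subtype.ext heval.symm
    have hmk := (key t).symm.trans
      ((congrArg g harg).trans (key (StAux.tmap some u)))
    have htequiv : TEquiv (StAux.red t) (StAux.red (StAux.tmap some u)) :=
      StAux.FreeSteiner.mk_eq.mp hmk
    have h4 : Occurs none (StAux.red t) := by
      rw [StAux.red_of_reduced ht]; exact hot
    have h5 : Occurs none (StAux.tmap some u) :=
      StAux.occurs_red ((StAux.occurs_iff_of_tequiv htequiv).mp h4)
    obtain ⟨x, _, hx⟩ := StAux.occurs_tmap h5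
    exact Option.some_ne_none x hx
  · -- the term condition implies independence of the extended tuple
    intro C
    have hstar := StAux.star a b ha C
    have hinj : Function.Injective (eTup a b) := by
      intro o o' hoo
      cases o with
      | none =>
        cases o' with
        | none => rfl
        | some i =>
          exfalso
          refine C (.var none) (StAux.reduced_var _) Occurs.var ?_
          show b ∈ closure (Set.range a)
          rw [show b = a i from hoo]
          exact mem_closure.base (Set.mem_range_self i)
      | some i =>
        cases o' with
        | none =>
          exfalso
          refine C (.var none) (StAux.reduced_var _) Occurs.var ?_
          show b ∈ closure (Set.range a)
          rw [show b = a i from hoo.symm]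
          exact mem_closure.base (Set.mem_range_self i)
        | some j => exact congrArg some (ha.1 (hoo : a i = a j))
    refine ⟨hinj, ?_⟩
    intro N instN f
    have key : ∀ t s : Term (Option ι), t.eval (eTup a b) = s.eval (eTup a b) →
        t.eval (fun o : Option ι => f ⟨eTup a b o, Set.mem_range_self o⟩) =
        s.eval (fun o : Option ι => f ⟨eTup a b o, Set.mem_range_self o⟩) := by
      intro t s h
      have h2 := hstar (StAux.red t) (StAux.red s)
        (StAux.red_reduced t) (StAux.red_reduced s)
        (by rw [StAux.red_eval, StAux.red_eval]; exact h)
      calc t.eval (fun o : Option ι => f ⟨eTup a b o, Set.mem_range_self o⟩)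
          = (StAux.red t).eval
              (fun o : Option ι => f ⟨eTup a b o, Set.mem_range_self o⟩) :=
            (StAux.red_eval _ t).symm
        _ = (StAux.red s).eval
              (fun o : Option ι => f ⟨eTup a b o, Set.mem_range_self o⟩) :=
            StAux.eval_eq_of_tequiv h2 _
        _ = s.eval (fun o : Option ι => f ⟨eTup a b o, Set.mem_range_self o⟩) :=
            StAux.red_eval _ s
    refine ⟨⟨fun x => (StAux.exists_term_of_mem_closure x.2).choose.eval
      (fun o : Option ι => f ⟨eTup a b o, Set.mem_range_self o⟩), ?_⟩, ?_⟩
    · -- multiplicativity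
      intro x y
      have hx := (StAux.exists_term_of_mem_closure x.2).choose_spec
      have hy := (StAux.exists_term_of_mem_closure y.2).choose_spec
      have hxy := (StAux.exists_term_of_mem_closure (x * y).2).choose_spec
      have heq : (StAux.exists_term_of_mem_closure (x * y).2).choose.eval (eTup a b)
          = (Term.mul (StAux.exists_term_of_mem_closure x.2).choose
              (StAux.exists_term_of_mem_closure y.2).choose).eval (eTup a b) := by
        show _ = (StAux.exists_term_of_mem_closure x.2).choose.eval (eTup a b) *
          (StAux.exists_term_of_mem_closure y.2).choose.eval (eTup a b)
        rw [hx, hy, hxy]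
        rfl
      exact key _ _ heq
    · -- the generators are sent correctly
      rintro ⟨x, hx⟩
      have hT := (StAux.exists_term_of_mem_closure
        (mem_closure.base hx)).choose_spec
      have ho : eTup a b hx.choose = x := hx.choose_spec
      have h3 := key _ (Term.var hx.choose) (by rw [hT]; exact ho.symm)
      show (StAux.exists_term_of_mem_closure (mem_closure.base hx)).choose.eval _ = _
      rw [h3]
      show f ⟨eTup a b hx.choose, Set.mem_range_self _⟩ = f ⟨x, hx⟩
      exact congrArg f (Subtype.ext ho)
end

section
/- Let (ā, b) be an independent tuple in a Steiner quasigroup and let t(x̄, y) be a term with exactly one occurrence of y. Then the endomorphism of ⟨ā, b⟩ induced by ā ↦ ā and b ↦ t(ā, b) is an automorphism of ⟨ā, b⟩. -/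
/-!
The inverse is the endomorphism fixing `ā` and sending `b` to `r(ā, b)`, where `r` solves
`t(ā, y) = z` for `y`: peeling off the outermost product `t₁ · t₂` with `y` in `t₁` turns
`t₁ · t₂ = z` into `t₁ = t₂ · z`. Both composites fix the generators, so they are the identity.
-/

namespace Steiner

variable {M : Type} [Steiner M]

theorem mul_mul_cancel_right (x y : M) : x * y * x = y := by
  rw [Steiner.comm, Steiner.lcancel]

theorem mul_mul_cancel_middle (x y : M) : x * (y * x) = y := by
  rw [Steiner.comm y x, Steiner.lcancel]

def gen {ι : Type} (e : ι → M) (i : ι) : closure (Set.range e) :=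
  ⟨e i, mem_closure.base ⟨i, rfl⟩⟩

theorem closure_hom_ext {ι N : Type} [Steiner N] {e : ι → M}
    {g h : closure (Set.range e) →ₙ* N} (H : ∀ i, g (gen e i) = h (gen e i)) : g = h := by
  ext ⟨z, hz⟩
  induction hz with
  | base hx =>
    obtain ⟨i, rfl⟩ := hx
    exact H i
  | @mul a b ha hb iha ihb =>
    change g (⟨a, ha⟩ * ⟨b, hb⟩) = h (⟨a, ha⟩ * ⟨b, hb⟩)
    rw [map_mul, map_mul, iha, ihb]

theorem IndepTuple.exists_lift {ι N : Type} [Steiner N] {e : ι → M} (he : IndepTuple e)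
    (v : ι → N) : ∃ g : closure (Set.range e) →ₙ* N, ∀ i, g (gen e i) = v i := by
  obtain ⟨g, hg⟩ := he.2 N (v ∘ (Equiv.ofInjective e he.1).symm)
  exact ⟨g, fun i => (hg ⟨e i, i, rfl⟩).trans (congrArg v (Equiv.ofInjective_symm_apply he.1 i))⟩

end Steiner

namespace Steiner.Term

variable {α N P : Type} [Steiner N] [Steiner P]

theorem val_eval {A : Set N} (u : α → closure A) :
    ∀ t : Term α, (t.eval u).1 = t.eval (fun a => (u a).1)
  | .var _ => rfl
  | .mul t s => congrArg₂ (· * ·) (val_eval u t) (val_eval u s)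

theorem _root_.MulHom.map_term_eval (g : N →ₙ* P) (u : α → N) :
    ∀ t : Term α, g (t.eval u) = t.eval (g ∘ u)
  | .var _ => rfl
  | .mul t s => by rw [eval, map_mul, g.map_term_eval u t, g.map_term_eval u s]; rfl

variable [DecidableEq α] {x : α}

theorem eval_congr_of_occ_eq_zero {u v : α → N} (h : ∀ y ≠ x, u y = v y) :
    ∀ t : Term α, t.occ x = 0 → t.eval u = t.eval v
  | .var y, ht => h y (by simpa [occ] using ht)
  | .mul t s, ht => by
    simp only [occ, Nat.add_eq_zero_iff] at ht
    rw [eval, eval, eval_congr_of_occ_eq_zero h t ht.1, eval_congr_of_occ_eq_zero h s ht.2]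

theorem occ_mul_eq_one {t s : Term α} (h : (Term.mul t s).occ x = 1) :
    (t.occ x = 1 ∧ s.occ x = 0) ∨ (t.occ x = 0 ∧ s.occ x = 1) := by
  simp only [occ] at h
  omega

/-- The value of `x` that solves `t = z`, the other variables taking their values from `u`;
this is only meaningful when `x` occurs exactly once in `t`. -/
def solve (x : α) (u : α → N) : Term α → N → N
  | .var _, z => z
  | .mul t s, z => if t.occ x = 1 then t.solve x u (s.eval u * z) else s.solve x u (t.eval u * z)

theorem eval_update_solve (u : α → N) :
    ∀ t : Term α, t.occ x = 1 → ∀ z, t.eval (Function.update u x (t.solve x u z)) = z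
  | .var y, ht, z => by
    obtain rfl : y = x := by simpa [occ] using ht
    simp [solve, eval]
  | .mul t s, ht, z => by
    have off (w : N) (y : α) (hy : y ≠ x) : Function.update u x w y = u y :=
      Function.update_of_ne hy _ _
    rcases occ_mul_eq_one ht with ⟨ht, hs⟩ | ⟨ht, hs⟩
    · rw [solve, if_pos ht, eval, eval_update_solve u t ht,
        eval_congr_of_occ_eq_zero (off _) s hs, mul_mul_cancel_right]
    · rw [solve, if_neg (by omega), eval, eval_update_solve u s hs,
        eval_congr_of_occ_eq_zero (off _) t ht, Steiner.lcancel]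

theorem solve_eval (u : α → N) : ∀ t : Term α, t.occ x = 1 → t.solve x u (t.eval u) = u x
  | .var y, ht => by
    obtain rfl : y = x := by simpa [occ] using ht
    rfl
  | .mul t s, ht => by
    rcases occ_mul_eq_one ht with ⟨ht, _⟩ | ⟨ht, hs⟩
    · rw [solve, if_pos ht, eval, mul_mul_cancel_middle, solve_eval u t ht]
    · rw [solve, if_neg (by omega), eval, Steiner.lcancel, solve_eval u s hs]

theorem solve_congr {u v : α → N} (h : ∀ y ≠ x, u y = v y) :
    ∀ t : Term α, t.occ x = 1 → ∀ z, t.solve x u z = t.solve x v z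
  | .var _, _, _ => rfl
  | .mul t s, ht, z => by
    rcases occ_mul_eq_one ht with ⟨ht, hs⟩ | ⟨ht, hs⟩
    · rw [solve, solve, if_pos ht, if_pos ht, eval_congr_of_occ_eq_zero h s hs,
        solve_congr h t ht]
    · rw [solve, solve, if_neg (by omega), if_neg (by omega),
        eval_congr_of_occ_eq_zero h t ht, solve_congr h s hs]

theorem _root_.MulHom.map_term_solve (g : N →ₙ* P) (u : α → N) :
    ∀ (t : Term α) (z : N), g (t.solve x u z) = t.solve x (g ∘ u) (g z)
  | .var _, _ => rfl
  | .mul t s, z => by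
    simp only [solve, apply_ite g, g.map_term_solve u t, g.map_term_solve u s, map_mul,
      g.map_term_eval]

end Steiner.Term

open Steiner

/-- For an independent tuple `e = (ā, b)` (with `b = e none`) and a term `t`
with exactly one occurrence of `y = none`, the endomorphism of `⟨ā, b⟩`
induced by `ā ↦ ā`, `b ↦ t(ā, b)` is an automorphism. -/
theorem stmt18 {M : Type} [Steiner M] {ι : Type} [DecidableEq ι]
    (e : Option ι → M) (he : IndepTuple e)
    (t : Term (Option ι)) (ht : t.occ none = 1)
    (f : closure (Set.range e) →ₙ* closure (Set.range e))
    (hfa : ∀ i : ι, f ⟨e (some i), mem_closure.base ⟨some i, rfl⟩⟩ =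
      ⟨e (some i), mem_closure.base ⟨some i, rfl⟩⟩)
    (hfb : f ⟨e none, mem_closure.base ⟨none, rfl⟩⟩ =
      ⟨t.eval e, eval_mem_closure e (fun x => Set.mem_range_self x) t⟩) :
    Function.Bijective f := by
  have hf_some (i : ι) : f (gen e (some i)) = gen e (some i) := hfa i
  have hf_off : ∀ y ≠ none, (f ∘ gen e) y = gen e y
    | some i, _ => hf_some i
  have hf_none : f (gen e none) = t.eval (gen e) :=
    hfb.trans (Subtype.ext (t.val_eval (gen e)).symm)
  obtain ⟨g, hg⟩ :=
    he.exists_lift (Function.update (gen e) none (t.solve none (gen e) (gen e none)))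
  have hg_some (i : ι) : g (gen e (some i)) = gen e (some i) := hg (some i)
  have hgf : g.comp f = MulHom.id _ := closure_hom_ext fun
    | some i => by rw [MulHom.comp_apply, hf_some, hg_some]; rfl
    | none => by
      rw [MulHom.comp_apply, hf_none, g.map_term_eval, show ⇑g ∘ gen e = _ from funext hg]
      exact t.eval_update_solve _ ht _
  have hfg : f.comp g = MulHom.id _ := closure_hom_ext fun
    | some i => by rw [MulHom.comp_apply, hg_some, hf_some]; rfl
    | none => by
      rw [MulHom.comp_apply, hg, Function.update_self, f.map_term_solve, hf_none,
        t.solve_congr hf_off ht]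
      exact t.solve_eval _ ht
  exact ⟨Function.LeftInverse.injective (DFunLike.congr_fun hgf),
    Function.RightInverse.surjective (DFunLike.congr_fun hfg)⟩
end
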